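/- arXiv:1409.6879 — 10 statements merged into one kernel-verified Lean document; each statement's English description precedes it below -/
import Mathlib

section
/- Let (P_1,…,P_k) be a set family tuple with each P_j of shape (m^{n_j}) and with defined type λ. Then there exists a closed set family tuple (P'_1,…,P'_k) with each P'_j of shape (m^{n_j}) whose type μ is defined and satisfies μ ⊴ λ; moreover, if (P_1,…,P_k) is not itself closed then μ ⊲ λ. -/
/-- The multiplicity of `i` in a set family `P`: the number of sets in `P` containing `i`. -/
def famMult (P : Finset (Finset ℕ)) (i : ℕ) : ℕ := (P.filter fun S => i ∈ S).card

/-- `P` is a set family of shape `(m^n)`: a collection of `n` distinct `m`-subsets of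
the positive integers. -/
def IsSetFamily (m n : ℕ) (P : Finset (Finset ℕ)) : Prop :=
  P.card = n ∧ ∀ S ∈ P, S.card = m ∧ ∀ x ∈ S, 1 ≤ x

/-- `B` majorizes `A` (written `A ⪯ B`): the `r`-th smallest element of `A` is at most
the `r`-th smallest element of `B` (the sets in question have the same cardinality). -/
def SetMaj (A B : Finset ℕ) : Prop :=
  ∀ r : ℕ, (A.sort (· ≤ ·)).getD r 0 ≤ (B.sort (· ≤ ·)).getD r 0

/-- A set family (of `m`-subsets) is closed if it is downward closed under majorization. -/
def ClosedFam (m : ℕ) (P : Finset (Finset ℕ)) : Prop :=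
  ∀ B ∈ P, ∀ A : Finset ℕ, A.card = m → (∀ x ∈ A, 1 ≤ x) → SetMaj A B → A ∈ P

/-- The type of a family (or tuple) whose multiplicity function is `f` is defined exactly
when `f` is weakly decreasing on the positive integers; then `f` is the conjugate `λ'`
of the type `λ`. -/
def TypeDefined (f : ℕ → ℕ) : Prop := ∀ i j : ℕ, 1 ≤ i → i ≤ j → f j ≤ f i

/-- The sum of the first `j` parts of the partition `λ` whose conjugate is `f`:
`λ_1 + ⋯ + λ_j = Σ_x min (λ'_x) j`. -/
noncomputable def partSum (f : ℕ → ℕ) (j : ℕ) : ℕ := ∑ᶠ x, min (f x) j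

/-- Dominance order: the partition with conjugate `g` is dominated (`⊴`) by the partition
with conjugate `f`. -/
def ConjDom (g f : ℕ → ℕ) : Prop := ∀ j : ℕ, partSum g j ≤ partSum f j

/-- Strict dominance `⊲` of the partition with conjugate `g` by the one with conjugate `f`. -/
def ConjStrictDom (g f : ℕ → ℕ) : Prop := ConjDom g f ∧ ∃ i : ℕ, 1 ≤ i ∧ g i ≠ f i

/-- The total multiplicity of `i` over a tuple of set families. -/
def tupMult {k : ℕ} (P : Fin k → Finset (Finset ℕ)) (i : ℕ) : ℕ := ∑ j, famMult (P j) i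

/-!
Take `y ≥ 1` such that some family is not closed under the step `y + 1 ↦ y`. UV-compressing
every family along `({y}, {y + 1})` keeps sizes and uniformity and moves `T > 0` units of
multiplicity from `y + 1` to `y`. At most `λ'_y` of the compressed sets still
contain `y + 1`, so the pair `(λ'_y, λ'_{y+1})` only becomes more unbalanced, and since each
partial sum `λ_1 + ⋯ + λ_j = ∑ₓ min (λ'_x) j` is a sum of concave functions, the type goes down
in dominance, while `∑ᵢ i λ'_i`, the sum of all entries, drops by `T`. Iterating, we reach
shifted families: their multiplicities are weakly decreasing, and they are closed because any
`A ⪯ B` is reached from `B` by single steps `y + 1 ↦ y`. If some family was not closed, it was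
not shifted, so `∑ᵢ i λ'_i` dropped strictly and the type changed.
-/

open Finset UV
open scoped FinsetFamily

namespace UV

variable {α M : Type*} [GeneralizedBooleanAlgebra α] [DecidableRel (@Disjoint α _ _)]
  [DecidableLE α]

theorem compress_le_sup (u v a : α) : compress u v a ≤ a ⊔ u := by
  unfold compress
  split_ifs
  exacts [sdiff_le, le_sup_left]

variable [DecidableEq α]

def moved (u v : α) (s : Finset α) : Finset α := {a ∈ s | compress u v a ∉ s}

theorem compress_ne_of_mem_moved {u v a : α} {s : Finset α} (ha : a ∈ moved u v s) :
    compress u v a ≠ a := by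
  rw [moved, mem_filter] at ha
  exact fun h => ha.2 (by rw [h]; exact ha.1)

theorem sum_compression_add_sum [AddCommMonoid M] (u v : α) (s : Finset α) (w : α → M) :
    ∑ a ∈ 𝓒 u v s, w a + ∑ a ∈ moved u v s, w a =
      ∑ a ∈ s, w a + ∑ a ∈ moved u v s, w (compress u v a) := by
  rw [moved, compression, sum_union compress_disjoint, filter_image, sum_image compress_injOn,
    ← sum_filter_add_sum_filter_not s (fun a => compress u v a ∈ s) w]
  abel

end UV

theorem famMult_compression_add (u v : Finset ℕ) (s : Finset (Finset ℕ)) (i : ℕ) :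
    famMult (𝓒 u v s) i + famMult (moved u v s) i =
      famMult s i + #{a ∈ moved u v s | i ∈ compress u v a} := by
  simp only [famMult, card_filter]
  exact sum_compression_add_sum u v s _

section SingletonShift

variable {y : ℕ} {B : Finset ℕ}

theorem compress_singleton_succ (hy : y ∉ B) (hy1 : y + 1 ∈ B) :
    compress {y} {y + 1} B = insert y (B.erase (y + 1)) := by
  rw [compress_of_disjoint_of_le (disjoint_singleton_left.2 hy) (singleton_subset_iff.2 hy1)]
  ext x
  rcases eq_or_ne x y with rfl | hx <;> simp [*, and_comm]

theorem compress_singleton_succ_of_not (h : ¬ (y ∉ B ∧ y + 1 ∈ B)) :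
    compress {y} {y + 1} B = B := by
  rw [compress, if_neg]
  simpa using h

theorem notMem_and_mem_of_compress_ne (h : compress {y} {y + 1} B ≠ B) : y ∉ B ∧ y + 1 ∈ B := by
  by_contra h'
  exact h (compress_singleton_succ_of_not h')

theorem mem_compress_singleton_succ_self (hB : y + 1 ∈ B) :
    y ∈ compress {y} {y + 1} B := by
  by_cases hy : y ∈ B
  · rwa [compress_singleton_succ_of_not fun h => h.1 hy]
  · simp [compress_singleton_succ hy hB]

theorem compress_singleton_succ_injOn :
    Set.InjOn (compress ({y} : Finset ℕ) {y + 1}) {B | y + 1 ∈ B} := by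
  refine Set.LeftInvOn.injOn (f₁' := compress {y + 1} {y}) fun B (hB : y + 1 ∈ B) => ?_
  by_cases hy : y ∈ B
  · rw [compress_singleton_succ_of_not fun h => h.1 hy, compress,
      if_neg fun h => disjoint_singleton_left.1 h.1 hB]
  · rw [compress_of_disjoint_of_le (disjoint_singleton_left.2 hy) (singleton_subset_iff.2 hB)]
    exact compress_of_disjoint_of_le' (disjoint_singleton_left.2 hy) (singleton_subset_iff.2 hB)

theorem sum_insert_erase_succ_add_one (hy : y ∉ B) (hy1 : y + 1 ∈ B) :
    ∑ x ∈ insert y (B.erase (y + 1)), x + 1 = ∑ x ∈ B, x := by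
  rw [sum_insert fun h => hy (mem_of_mem_erase h), ← sum_erase_add B _ hy1]
  ring

end SingletonShift

theorem notMem_and_mem_of_mem_moved {y : ℕ} {s : Finset (Finset ℕ)} {B : Finset ℕ}
    (hB : B ∈ moved {y} {y + 1} s) : y ∉ B ∧ y + 1 ∈ B :=
  notMem_and_mem_of_compress_ne (compress_ne_of_mem_moved hB)

theorem famMult_compression_self (y : ℕ) (s : Finset (Finset ℕ)) :
    famMult (𝓒 {y} {y + 1} s) y = famMult s y + #(moved {y} {y + 1} s) := by
  have h := famMult_compression_add {y} {y + 1} s y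
  have h₀ : famMult (moved {y} {y + 1} s) y = 0 :=
    card_eq_zero.2 (filter_false_of_mem fun B hB => (notMem_and_mem_of_mem_moved hB).1)
  have h₁ : #{B ∈ moved {y} {y + 1} s | y ∈ compress {y} {y + 1} B} = #(moved {y} {y + 1} s) := by
    refine congrArg card (filter_true_of_mem fun B hB => ?_)
    obtain ⟨hy, hy1⟩ := notMem_and_mem_of_mem_moved hB
    simp [compress_singleton_succ hy hy1]
  omega

theorem famMult_compression_succ (y : ℕ) (s : Finset (Finset ℕ)) :
    famMult (𝓒 {y} {y + 1} s) (y + 1) + #(moved {y} {y + 1} s) = famMult s (y + 1) := by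
  have h := famMult_compression_add {y} {y + 1} s (y + 1)
  have h₀ : famMult (moved {y} {y + 1} s) (y + 1) = #(moved {y} {y + 1} s) :=
    congrArg card (filter_true_of_mem fun B hB => (notMem_and_mem_of_mem_moved hB).2)
  have h₁ : #{B ∈ moved {y} {y + 1} s | y + 1 ∈ compress {y} {y + 1} B} = 0 := by
    refine card_eq_zero.2 (filter_false_of_mem fun B hB => ?_)
    obtain ⟨hy, hy1⟩ := notMem_and_mem_of_mem_moved hB
    simp [compress_singleton_succ hy hy1]
  omega

theorem famMult_compression_of_ne {y i : ℕ} (hiy : i ≠ y) (hiy1 : i ≠ y + 1)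
    (s : Finset (Finset ℕ)) : famMult (𝓒 {y} {y + 1} s) i = famMult s i := by
  have h := famMult_compression_add {y} {y + 1} s i
  have h₀ : #{B ∈ moved {y} {y + 1} s | i ∈ compress {y} {y + 1} B} =
      famMult (moved {y} {y + 1} s) i := by
    refine congrArg card (filter_congr fun B hB => ?_)
    obtain ⟨hy, hy1⟩ := notMem_and_mem_of_mem_moved hB
    simp [compress_singleton_succ hy hy1, hiy, hiy1]
  omega

theorem famMult_succ_le_of_compress_mem {y : ℕ} {Q R : Finset (Finset ℕ)}
    (h : ∀ B ∈ Q, y + 1 ∈ B → compress {y} {y + 1} B ∈ R) :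
    famMult Q (y + 1) ≤ famMult R y := by
  refine card_le_card_of_injOn (compress {y} {y + 1}) (fun B hB => ?_)
    (compress_singleton_succ_injOn.mono fun B hB => (mem_filter.1 hB).2)
  replace hB := mem_filter.1 (mem_coe.1 hB)
  exact mem_filter.2 ⟨h B hB.1 hB.2, mem_compress_singleton_succ_self hB.2⟩

theorem famMult_compression_succ_le (y : ℕ) (s : Finset (Finset ℕ)) :
    famMult (𝓒 {y} {y + 1} s) (y + 1) ≤ famMult s y := by
  refine famMult_succ_le_of_compress_mem fun B hB hB₁ => ?_
  obtain ⟨-, hcB⟩ | ⟨hBs, b, hb, rfl⟩ := mem_compression.1 hB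
  · exact hcB
  · have hmoved : b ∈ moved {y} {y + 1} s := mem_filter.2 ⟨hb, hBs⟩
    obtain ⟨hyb, hyb₁⟩ := notMem_and_mem_of_mem_moved hmoved
    simp [compress_singleton_succ hyb hyb₁] at hB₁

theorem IsSetFamily.compression {y m n : ℕ} {s : Finset (Finset ℕ)} (hy : 1 ≤ y)
    (hs : IsSetFamily m n s) : IsSetFamily m n (𝓒 {y} {y + 1} s) := by
  refine ⟨(card_compression _ _ s).trans hs.1, fun B hB => ?_⟩
  obtain ⟨hBs, -⟩ | ⟨-, b, hb, rfl⟩ := mem_compression.1 hB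
  · exact hs.2 B hBs
  refine ⟨(card_compress (by simp) b).trans (hs.2 b hb).1, fun x hx => ?_⟩
  rcases mem_union.1 (compress_le_sup _ _ b hx) with hxb | hxy
  · exact (hs.2 b hb).2 x hxb
  · rwa [mem_singleton.1 hxy]

def IsShifted (Q : Finset (Finset ℕ)) : Prop :=
  ∀ B ∈ Q, ∀ y, 1 ≤ y → compress {y} {y + 1} B ∈ Q

theorem IsShifted.famMult_antitoneOn {Q : Finset (Finset ℕ)} (hQ : IsShifted Q) :
    AntitoneOn (famMult Q) (Set.Ici 1) :=
  antitoneOn_nat_Ici_of_succ_le fun y hy =>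
    famMult_succ_le_of_compress_mem fun B hB _ => hQ B hB y hy

theorem typeDefined_tupMult_of_isShifted {k : ℕ} {P : Fin k → Finset (Finset ℕ)}
    (hP : ∀ j, IsShifted (P j)) : TypeDefined (tupMult P) := fun _ _ hi hij =>
  sum_le_sum fun j _ => (hP j).famMult_antitoneOn hi (le_trans hi hij) hij

-- `c` is `b` with its entry at the first index where `a` and `b` differ lowered by one.
theorem List.exists_shift_of_getD_le {a b : List ℕ} (hlen : a.length = b.length)
    (ha : a.Pairwise (· < ·)) (hb : b.Pairwise (· < ·)) (hab : ∀ r, a.getD r 0 ≤ b.getD r 0)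
    (hne : a ≠ b) :
    ∃ y, (∃ x ∈ a, x ≤ y) ∧ y ∉ b ∧ y + 1 ∈ b ∧ ∃ c : List ℕ, c.Pairwise (· < ·) ∧
      (∀ w, w ∈ c ↔ w = y ∨ w ∈ b ∧ w ≠ y + 1) ∧ ∀ r, a.getD r 0 ≤ c.getD r 0 := by
  induction a generalizing b with
  | nil => exact absurd (List.eq_nil_of_length_eq_zero hlen.symm).symm hne
  | cons x a ih =>
    obtain _ | ⟨z, b⟩ := b
    · simp at hlen
    rw [List.pairwise_cons] at ha hb
    have hxz : x ≤ z := hab 0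
    rcases hxz.lt_or_eq with hxz | rfl
    · refine ⟨z - 1, ⟨x, List.mem_cons_self, by omega⟩, ?_, ?_, (z - 1) :: b, ?_, ?_, ?_⟩
      · simp only [List.mem_cons, not_or]
        exact ⟨by omega, fun h => by have := hb.1 _ h; omega⟩
      · simp only [List.mem_cons]; omega
      · exact List.pairwise_cons.2 ⟨fun w hw => by have := hb.1 w hw; omega, hb.2⟩
      · intro w
        have := hb.1 w
        simp only [List.mem_cons]
        grind
      · rintro (_ | r)
        · simp only [List.getD_cons_zero]; omega
        · exact hab (r + 1)
    · obtain ⟨y, ⟨x', hx'a, hx'y⟩, hy, hy₁, c, hc, hcmem, hcmaj⟩ :=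
        ih (by simpa using hlen) ha.2 hb.2 (fun r => hab (r + 1)) fun h => hne (h ▸ rfl)
      have hxy : x < y := (ha.1 x' hx'a).trans_le hx'y
      refine ⟨y, ⟨x', List.mem_cons_of_mem _ hx'a, hx'y⟩, ?_, List.mem_cons_of_mem _ hy₁,
        x :: c, ?_, ?_, ?_⟩
      · simp only [List.mem_cons, not_or]
        exact ⟨hxy.ne', hy⟩
      · refine List.pairwise_cons.2 ⟨fun w hw => ?_, hc⟩
        rcases (hcmem w).1 hw with rfl | ⟨hw, -⟩
        exacts [hxy, hb.1 w hw]
      · intro w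
        simp only [List.mem_cons, hcmem]
        grind
      · rintro (_ | r)
        · exact le_rfl
        · exact hcmaj r

theorem SetMaj.exists_shift {A B : Finset ℕ} (hcard : A.card = B.card) (hA : ∀ x ∈ A, 1 ≤ x)
    (hAB : SetMaj A B) (hne : A ≠ B) :
    ∃ y, 1 ≤ y ∧ y ∉ B ∧ y + 1 ∈ B ∧ SetMaj A (insert y (B.erase (y + 1))) := by
  have hsort : A.sort ≠ B.sort := fun h => hne (by rw [← sort_toFinset A (· ≤ ·), h, sort_toFinset])
  obtain ⟨y, ⟨x, hxA, hxy⟩, hy, hy₁, c, hc, hcmem, hcmaj⟩ :=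
    List.exists_shift_of_getD_le (by simp [hcard]) A.sortedLT_sort.pairwise B.sortedLT_sort.pairwise
      hAB hsort
  have hcsort : (insert y (B.erase (y + 1))).sort = c := by
    have hcB : c.toFinset = insert y (B.erase (y + 1)) := by
      ext w
      simp [hcmem, and_comm]
    rw [← hcB]
    exact (List.toFinset_sort _ hc.nodup).2 (hc.imp le_of_lt)
  refine ⟨y, (hA x (by simpa using hxA)).trans hxy, by simpa using hy, by simpa using hy₁,
    fun r => ?_⟩
  rw [hcsort]
  exact hcmaj r

theorem IsShifted.closedFam {m : ℕ} {Q : Finset (Finset ℕ)} (hQm : ∀ B ∈ Q, B.card = m)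
    (hQ : IsShifted Q) : ClosedFam m Q := by
  intro B hB A hAm hA hAB
  induction hs : ∑ x ∈ B, x using Nat.strong_induction_on generalizing B with
  | _ s ih =>
    obtain rfl | hne := eq_or_ne A B
    · exact hB
    obtain ⟨y, hy₁, hy, hyB, hAB'⟩ := hAB.exists_shift (hAm.trans (hQm B hB).symm) hA hne
    have hmem := hQ B hB y hy₁
    rw [compress_singleton_succ hy hyB] at hmem
    have hsum := sum_insert_erase_succ_add_one hy hyB
    exact ih _ (by omega) _ hmem hAB' rfl

theorem finsum_add_eq_of_eq_off_pair {α M : Type*} [AddCommMonoid M] {f g : α → ℕ}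
    (hf : f.support.Finite) {a b : α} (hab : a ≠ b) (hfg : ∀ x, x ≠ a → x ≠ b → g x = f x)
    (φ : α → ℕ → M) (hφ : ∀ x, φ x 0 = 0) :
    ∑ᶠ x, φ x (g x) + (φ a (f a) + φ b (f b)) = ∑ᶠ x, φ x (f x) + (φ a (g a) + φ b (g b)) := by
  classical
  set U := hf.toFinset ∪ {a, b}
  have hpair : {a, b} ⊆ U := subset_union_right
  have hsupp : ∀ h : α → ℕ, (∀ x ∉ U, h x = 0) → (fun x => φ x (h x)).support ⊆ U :=
    fun h hU x hx => by_contra fun hxU => hx (by simp only [hU x hxU, hφ])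
  have hfU : ∀ x ∉ U, f x = 0 := fun x hx => by
    simpa using fun h => hx (mem_union_left _ (hf.mem_toFinset.2 h))
  have hgU : ∀ x ∉ U, g x = 0 := fun x hx => by
    have hx' : x ∉ ({a, b} : Finset α) := fun h => hx (hpair h)
    simp only [mem_insert, mem_singleton, not_or] at hx'
    rw [hfg x hx'.1 hx'.2, hfU x hx]
  rw [finsum_eq_sum_of_support_subset _ (hsupp g hgU),
    finsum_eq_sum_of_support_subset _ (hsupp f hfU),
    ← sum_sdiff hpair, ← sum_sdiff hpair, sum_pair hab, sum_pair hab,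
    sum_congr rfl fun x hx => ?_]
  · abel
  · simp only [mem_sdiff, mem_insert, mem_singleton, not_or] at hx
    rw [hfg x hx.2.1 hx.2.2]

theorem partSum_le_of_transfer {f g : ℕ → ℕ} (hf : f.support.Finite) {a b T : ℕ} (hab : a ≠ b)
    (hga : g a = f a + T) (hgb : g b + T = f b) (hgbfa : g b ≤ f a)
    (hfg : ∀ x, x ≠ a → x ≠ b → g x = f x) (j : ℕ) : partSum g j ≤ partSum f j := by
  have h := finsum_add_eq_of_eq_off_pair hf hab hfg (fun _ v => min v j) fun _ => Nat.zero_min j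
  simp only [partSum] at h ⊢
  omega

noncomputable def moment (f : ℕ → ℕ) : ℕ := ∑ᶠ x, x * f x

theorem moment_add_of_transfer {f g : ℕ → ℕ} (hf : f.support.Finite) {y T : ℕ}
    (hgy : g y = f y + T) (hgy₁ : g (y + 1) + T = f (y + 1))
    (hfg : ∀ x, x ≠ y → x ≠ y + 1 → g x = f x) : moment g + T = moment f := by
  have h := finsum_add_eq_of_eq_off_pair hf (Nat.lt_succ_self y).ne hfg (fun x v => x * v)
    fun x => mul_zero x
  simp only [moment, hgy, ← hgy₁] at h ⊢
  nlinarith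

theorem moment_congr {f g : ℕ → ℕ} (h : ∀ i, 1 ≤ i → g i = f i) : moment g = moment f :=
  finsum_congr fun x => by
    rcases Nat.eq_zero_or_pos x with rfl | hx
    · simp
    · rw [h x hx]

section Tuple

variable {k : ℕ}

theorem support_tupMult_finite (P : Fin k → Finset (Finset ℕ)) : (tupMult P).support.Finite := by
  refine (univ.biUnion fun j => (P j).biUnion id).finite_toSet.subset fun x hx => ?_
  obtain ⟨j, -, hj⟩ := exists_ne_zero_of_sum_ne_zero hx
  obtain ⟨B, hB⟩ := card_ne_zero.1 hj
  rw [mem_filter] at hB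
  simpa using ⟨j, B, hB⟩

theorem compression_conjDom_and_moment_lt {P : Fin k → Finset (Finset ℕ)} {y : ℕ} {j₀ : Fin k}
    {B : Finset ℕ} (hB : B ∈ moved {y} {y + 1} (P j₀)) :
    ConjDom (tupMult fun j => 𝓒 {y} {y + 1} (P j)) (tupMult P) ∧
      moment (tupMult fun j => 𝓒 {y} {y + 1} (P j)) < moment (tupMult P) := by
  set T := ∑ j, #(moved {y} {y + 1} (P j))
  have hT : 0 < T := by
    refine (card_pos.2 ⟨B, hB⟩).trans_le ?_
    exact single_le_sum (fun j _ => Nat.zero_le #(moved {y} {y + 1} (P j))) (mem_univ j₀)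
  have hgy : tupMult (fun j => 𝓒 {y} {y + 1} (P j)) y = tupMult P y + T := by
    simp only [tupMult, T, ← sum_add_distrib, famMult_compression_self]
  have hgy₁ : tupMult (fun j => 𝓒 {y} {y + 1} (P j)) (y + 1) + T = tupMult P (y + 1) := by
    simp only [tupMult, T, ← sum_add_distrib, famMult_compression_succ]
  have hle : tupMult (fun j => 𝓒 {y} {y + 1} (P j)) (y + 1) ≤ tupMult P y :=
    sum_le_sum fun j _ => famMult_compression_succ_le y (P j)
  have hfg : ∀ x, x ≠ y → x ≠ y + 1 → tupMult (fun j => 𝓒 {y} {y + 1} (P j)) x = tupMult P x :=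
    fun x hx hx₁ => sum_congr rfl fun j _ => famMult_compression_of_ne hx hx₁ (P j)
  have hfin := support_tupMult_finite P
  refine ⟨partSum_le_of_transfer hfin (Nat.lt_succ_self y).ne hgy hgy₁ hle hfg, ?_⟩
  have := moment_add_of_transfer hfin hgy hgy₁ hfg
  omega

theorem exists_shifted_conjDom {m : ℕ} {n : Fin k → ℕ} (P : Fin k → Finset (Finset ℕ))
    (hP : ∀ j, IsSetFamily m (n j) (P j)) :
    ∃ P' : Fin k → Finset (Finset ℕ), (∀ j, IsSetFamily m (n j) (P' j)) ∧
      (∀ j, IsShifted (P' j)) ∧ ConjDom (tupMult P') (tupMult P) ∧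
      moment (tupMult P') ≤ moment (tupMult P) ∧
      ((¬ ∀ j, IsShifted (P j)) → moment (tupMult P') < moment (tupMult P)) := by
  induction hM : moment (tupMult P) using Nat.strong_induction_on generalizing P with
  | _ M ih =>
    subst hM
    by_cases hsh : ∀ j, IsShifted (P j)
    · exact ⟨P, hP, hsh, fun _ => le_rfl, le_rfl, fun h => absurd hsh h⟩
    obtain ⟨j₀, B, hB, y, hy, hyB⟩ :
        ∃ j, ∃ B ∈ P j, ∃ y, 1 ≤ y ∧ compress {y} {y + 1} B ∉ P j := by
      simpa [IsShifted] using hsh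
    obtain ⟨hdom, hlt⟩ := compression_conjDom_and_moment_lt (mem_filter.2 ⟨hB, hyB⟩)
    obtain ⟨P', hP', hsh', hdom', hle', -⟩ :=
      ih _ hlt _ (fun j => (hP j).compression hy) rfl
    exact ⟨P', hP', hsh', fun i => (hdom' i).trans (hdom i), by omega, fun _ => by omega⟩

end Tuple

theorem stmt_0_general (m k : ℕ) (n : Fin k → ℕ) (P : Fin k → Finset (Finset ℕ))
    (hP : ∀ j, IsSetFamily m (n j) (P j)) :
    ∃ P' : Fin k → Finset (Finset ℕ),
      (∀ j, IsSetFamily m (n j) (P' j)) ∧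
      (∀ j, ClosedFam m (P' j)) ∧
      TypeDefined (tupMult P') ∧
      ConjDom (tupMult P') (tupMult P) ∧
      (¬ (∀ j, ClosedFam m (P j)) → ConjStrictDom (tupMult P') (tupMult P)) := by
  obtain ⟨P', hP', hsh, hdom, -, hlt⟩ := exists_shifted_conjDom P hP
  have hclosed : ∀ {N Q}, IsSetFamily m N Q → IsShifted Q → ClosedFam m Q :=
    fun hQ hsh => hsh.closedFam fun S hS => (hQ.2 S hS).1
  refine ⟨P', hP', fun j => hclosed (hP' j) (hsh j), typeDefined_tupMult_of_isShifted hsh, hdom,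
    fun hnc => ⟨hdom, ?_⟩⟩
  have hmom := hlt fun h => hnc fun j => hclosed (hP j) (h j)
  by_contra! heq
  exact hmom.ne (moment_congr heq)

/-- Any set family tuple with defined type can be replaced by a closed one
whose type is dominated by the original; strictly so if the original tuple is not closed. -/
theorem stmt_0 (m k : ℕ) (n : Fin k → ℕ) (P : Fin k → Finset (Finset ℕ))
    (hP : ∀ j, IsSetFamily m (n j) (P j))
    (htype : TypeDefined (tupMult P)) :
    ∃ P' : Fin k → Finset (Finset ℕ),
      (∀ j, IsSetFamily m (n j) (P' j)) ∧
      (∀ j, ClosedFam m (P' j)) ∧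
      TypeDefined (tupMult P') ∧
      ConjDom (tupMult P') (tupMult P) ∧
      (¬ (∀ j, ClosedFam m (P j)) → ConjStrictDom (tupMult P') (tupMult P)) :=
  stmt_0_general m k n P hP
end

section
/- Every minimal set family tuple is closed: if (P_1,…,P_k) is a set family tuple with defined type λ, each P_j of shape (m^{n_j}), and there is no set family tuple (R_1,…,R_k) with each R_j of shape (m^{n_j}) whose type is defined and strictly dominated by λ, then every P_j is closed. -/
/-!
If some `P j` is not closed, it contains a set `B` and an element `b ∈ B` with `b - 1 ∉ B` such
that `B - b + (b - 1) ∉ P j`. Making this replacement moves one unit of the conjugate `λ'` from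
`b` to `b - 1`, which makes the type strictly smaller in dominance order; the only problem is
that the new multiplicity function may fail to be weakly decreasing. An ascent at `i` can only
occur at one of the two ends of the move, and the replacement `C - (i + 1) + i` in a set
witnessing it (which must exist, otherwise the multiplicity of `i` would dominate that of `i + 1`)
widens the move by one step while keeping it a single unit transfer to the left. The right end
cannot leave the support of `λ'`, so after finitely many steps we reach a tuple of defined type
strictly dominated by `λ`, contradicting minimality.
-/

open Finset

lemma sort_getD_eq_orderEmbOfFin (s : Finset ℕ) {k : ℕ} (hs : s.card = k) (r : ℕ) :
    (s.sort (· ≤ ·)).getD r 0 = if h : r < k then s.orderEmbOfFin hs ⟨r, h⟩ else 0 := by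
  split_ifs with h
  · rw [orderEmbOfFin_apply, List.getD_eq_getElem]; rfl
  · rw [List.getD_eq_default _ _ (by rw [length_sort]; omega)]

lemma setMaj_iff_orderEmbOfFin {A B : Finset ℕ} {m : ℕ} (hA : A.card = m) (hB : B.card = m) :
    SetMaj A B ↔ ∀ i, A.orderEmbOfFin hA i ≤ B.orderEmbOfFin hB i := by
  simp only [SetMaj, sort_getD_eq_orderEmbOfFin A hA, sort_getD_eq_orderEmbOfFin B hB]
  refine ⟨fun h i => by simpa using h i, fun h r => ?_⟩
  split_ifs
  · exact h _
  · exact le_rfl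

lemma exists_lt_forall_lt_eq {ι α : Type*} [LinearOrder ι] [WellFoundedLT ι] [PartialOrder α]
    {f g : ι → α} (hfg : f ≤ g) (hne : f ≠ g) :
    ∃ s, f s < g s ∧ ∀ r < s, f r = g r := by
  obtain ⟨s, hs, hmin⟩ := exists_minimal_of_wellFoundedLT _ (Function.ne_iff.1 hne)
  exact ⟨s, lt_of_le_of_ne (hfg s) hs,
    fun r hr => by_contra fun h => absurd (hmin h hr.le) (not_le.2 hr)⟩

section LowerElement

variable {B : Finset ℕ} {s : Fin B.card}

lemma pred_notMem_of_forall_lt_pred (hβ : 0 < B.orderEmbOfFin rfl s)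
    (hgap : ∀ r < s, B.orderEmbOfFin rfl r < B.orderEmbOfFin rfl s - 1) :
    B.orderEmbOfFin rfl s - 1 ∉ B := by
  intro hmem
  obtain ⟨r, hr⟩ : B.orderEmbOfFin rfl s - 1 ∈ Set.range (B.orderEmbOfFin rfl) := by
    rwa [range_orderEmbOfFin]
  rcases lt_or_ge r s with h | h
  · exact (hgap r h).ne hr
  · have := (B.orderEmbOfFin rfl).monotone h
    omega

lemma card_insert_pred_erase (hβ : 0 < B.orderEmbOfFin rfl s)
    (hgap : ∀ r < s, B.orderEmbOfFin rfl r < B.orderEmbOfFin rfl s - 1) :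
    (insert (B.orderEmbOfFin rfl s - 1) (B.erase (B.orderEmbOfFin rfl s))).card = B.card := by
  rw [card_insert_of_notMem (fun h => pred_notMem_of_forall_lt_pred hβ hgap (mem_of_mem_erase h)),
    card_erase_of_mem (orderEmbOfFin_mem B rfl s)]
  have := card_pos.2 ⟨_, orderEmbOfFin_mem B rfl s⟩
  omega

lemma orderEmbOfFin_insert_pred_erase (hβ : 0 < B.orderEmbOfFin rfl s)
    (hgap : ∀ r < s, B.orderEmbOfFin rfl r < B.orderEmbOfFin rfl s - 1) :
    ⇑((insert (B.orderEmbOfFin rfl s - 1) (B.erase (B.orderEmbOfFin rfl s))).orderEmbOfFin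
        (card_insert_pred_erase hβ hgap)) =
      Function.update (B.orderEmbOfFin rfl) s (B.orderEmbOfFin rfl s - 1) := by
  refine (orderEmbOfFin_unique _ (fun r => ?_) fun r t hrt => ?_).symm
  · rcases eq_or_ne r s with rfl | h
    · simp
    · simp only [Function.update_of_ne h, mem_insert, mem_erase]
      exact Or.inr ⟨(B.orderEmbOfFin rfl).injective.ne h, orderEmbOfFin_mem B rfl r⟩
  · simp only [Function.update_apply]
    split_ifs with h1 h2 h2
    · omega
    · have := (B.orderEmbOfFin rfl).strictMono (h1 ▸ hrt); omega
    · exact hgap r (h2 ▸ hrt)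
    · exact (B.orderEmbOfFin rfl).strictMono hrt

end LowerElement

/-- The element lowered is the entry of `B` at the first position where the increasing
enumerations of `A` and `B` differ; the entries before it agree with those of `A`, which leaves
room below it. -/
lemma exists_setMaj_insert_pred_erase {A B : Finset ℕ} (hcard : A.card = B.card)
    (hA : ∀ x ∈ A, 1 ≤ x) (hAB : SetMaj A B) (hne : A ≠ B) :
    ∃ b ∈ B, 2 ≤ b ∧ b - 1 ∉ B ∧ SetMaj A (insert (b - 1) (B.erase b)) := by
  have hαβ : ∀ i, A.orderEmbOfFin hcard i ≤ B.orderEmbOfFin rfl i :=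
    (setMaj_iff_orderEmbOfFin hcard rfl).1 hAB
  have hne' : ⇑(A.orderEmbOfFin hcard) ≠ ⇑(B.orderEmbOfFin rfl) := fun h => hne <| by
    rw [← coe_inj, ← range_orderEmbOfFin A hcard, ← range_orderEmbOfFin B rfl, h]
  obtain ⟨s, hs, hfirst⟩ := exists_lt_forall_lt_eq hαβ hne'
  have hpos : 1 ≤ A.orderEmbOfFin hcard s := hA _ (orderEmbOfFin_mem A hcard s)
  have hgap : ∀ r < s, B.orderEmbOfFin rfl r < B.orderEmbOfFin rfl s - 1 := fun r hr => by
    have := (A.orderEmbOfFin hcard).strictMono hr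
    rw [hfirst r hr] at this
    omega
  have hβ : 0 < B.orderEmbOfFin rfl s := by omega
  refine ⟨_, orderEmbOfFin_mem B rfl s, by omega, pred_notMem_of_forall_lt_pred hβ hgap, ?_⟩
  rw [setMaj_iff_orderEmbOfFin hcard (card_insert_pred_erase hβ hgap),
    orderEmbOfFin_insert_pred_erase hβ hgap]
  intro r
  rcases eq_or_ne r s with rfl | h
  · rw [Function.update_self]; omega
  · rw [Function.update_of_ne h]; exact hαβ r

/-- Starting from a violation `A ⪯ B`, `A ∉ Q`, follow the lowerings of `B` that stay above
`A`; as long as they lie in `Q` the element sum drops, so eventually one is missing. -/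
lemma exists_insert_pred_erase_notMem {m n : ℕ} {Q : Finset (Finset ℕ)}
    (hQ : IsSetFamily m n Q) (hQc : ¬ ClosedFam m Q) :
    ∃ B ∈ Q, ∃ b ∈ B, 2 ≤ b ∧ b - 1 ∉ B ∧ insert (b - 1) (B.erase b) ∉ Q := by
  simp only [ClosedFam, not_forall] at hQc
  obtain ⟨B, hB, A, hAcard, hApos, hAB, hA⟩ := hQc
  induction hw : ∑ x ∈ B, x using Nat.strong_induction_on generalizing B with
  | _ w IH =>
    obtain ⟨b, hb, hb2, hb1, hAB'⟩ := exists_setMaj_insert_pred_erase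
      (hAcard.trans (hQ.2 B hB).1.symm) hApos hAB fun h => hA (h ▸ hB)
    by_cases hB' : insert (b - 1) (B.erase b) ∈ Q
    · have hlt : ∑ x ∈ insert (b - 1) (B.erase b), x < w := by
        rw [sum_insert fun h => hb1 (mem_of_mem_erase h), ← hw, ← sum_erase_add B _ hb]
        omega
      exact IH _ hlt _ hB' hAB' rfl
    · exact ⟨B, hB, b, hb, hb2, hb1, hB'⟩

lemma famMult_succ_le_of_forall_mem {Q : Finset (Finset ℕ)} {i : ℕ}
    (h : ∀ C ∈ Q, i + 1 ∈ C → i ∉ C → insert i (C.erase (i + 1)) ∈ Q) :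
    famMult Q (i + 1) ≤ famMult Q i := by
  have hback : ∀ E : Finset ℕ, i + 1 ∈ E → i ∉ E →
      insert (i + 1) ((insert i (E.erase (i + 1))).erase i) = E := fun E h1 h0 => by
    rw [erase_insert fun h => h0 (mem_of_mem_erase h), insert_erase h1]
  refine card_le_card_of_injOn (fun C => if i ∈ C then C else insert i (C.erase (i + 1)))
    (fun C hC => ?_) (fun C hC D hD hCD => ?_)
  · simp only [coe_filter, Set.mem_ofPred_eq] at hC ⊢
    split_ifs with hi
    · exact ⟨hC.1, hi⟩
    · exact ⟨h C hC.1 hC.2 hi, mem_insert_self _ _⟩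
  · simp only [coe_filter, Set.mem_ofPred_eq] at hC hD hCD
    have hnot : ∀ E : Finset ℕ, i + 1 ∉ insert i (E.erase (i + 1)) := by simp
    split_ifs at hCD with hiC hiD hiD
    · exact hCD
    · exact absurd (hCD ▸ hC.2) (hnot D)
    · exact absurd (hCD ▸ hD.2) (hnot C)
    · rw [← hback C hC.2 hiC, ← hback D hD.2 hiD, hCD]

lemma exists_insert_erase_notMem_of_lt {k : ℕ} (R : Fin k → Finset (Finset ℕ)) {i : ℕ}
    (h : tupMult R i < tupMult R (i + 1)) :
    ∃ l, ∃ C ∈ R l, i + 1 ∈ C ∧ i ∉ C ∧ insert i (C.erase (i + 1)) ∉ R l := by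
  by_contra! hcon
  exact h.not_ge (sum_le_sum fun l _ => famMult_succ_le_of_forall_mem (hcon l))

lemma famMult_insert_erase {Q : Finset (Finset ℕ)} {C C' : Finset ℕ} (hC : C ∈ Q)
    (hC' : C' ∉ Q) (x : ℕ) :
    famMult (insert C' (Q.erase C)) x + (if x ∈ C then 1 else 0) =
      famMult Q x + (if x ∈ C' then 1 else 0) := by
  rw [famMult, famMult, card_filter, card_filter,
    sum_insert fun h => hC' (mem_of_mem_erase h), ← sum_erase_add Q _ hC]
  omega

lemma IsSetFamily.insert_erase {m n : ℕ} {Q : Finset (Finset ℕ)} {C C' : Finset ℕ}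
    (hQ : IsSetFamily m n Q) (hC : C ∈ Q) (hC' : C' ∉ Q) (hcard : C'.card = m)
    (hpos : ∀ x ∈ C', 1 ≤ x) : IsSetFamily m n (insert C' (Q.erase C)) := by
  refine ⟨?_, fun S hS => ?_⟩
  · rw [card_insert_of_notMem fun h => hC' (mem_of_mem_erase h), card_erase_add_one hC, hQ.1]
  · rcases mem_insert.1 hS with rfl | hS
    · exact ⟨hcard, hpos⟩
    · exact hQ.2 S (mem_of_mem_erase hS)

lemma tupMult_update {k : ℕ} (R : Fin k → Finset (Finset ℕ)) (l : Fin k)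
    (Q : Finset (Finset ℕ)) (x : ℕ) :
    tupMult (Function.update R l Q) x + famMult (R l) x = tupMult R x + famMult Q x := by
  simp only [tupMult, Function.apply_update (fun _ Q => famMult Q x)]
  rw [sum_update_of_mem (mem_univ l), ← sum_erase_add univ _ (mem_univ l),
    sdiff_singleton_eq_erase]
  omega

lemma exists_tupMult_add_single_eq {m k : ℕ} {n : Fin k → ℕ}
    {R : Fin k → Finset (Finset ℕ)} (hR : ∀ j, IsSetFamily m (n j) (R j)) {l : Fin k}
    {C : Finset ℕ} {a b : ℕ} (hC : C ∈ R l) (hb : b ∈ C) (ha : a ∉ C) (ha1 : 1 ≤ a)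
    (hC' : insert a (C.erase b) ∉ R l) :
    ∃ R' : Fin k → Finset (Finset ℕ), (∀ j, IsSetFamily m (n j) (R' j)) ∧
      tupMult R' + Pi.single b 1 = tupMult R + Pi.single a 1 := by
  have hcard : (insert a (C.erase b)).card = m := by
    rw [card_insert_of_notMem fun h => ha (mem_of_mem_erase h), card_erase_add_one hb,
      ((hR l).2 C hC).1]
  have hpos : ∀ x ∈ insert a (C.erase b), 1 ≤ x := by
    simp only [mem_insert, mem_erase]
    rintro x (rfl | ⟨-, hx⟩)
    exacts [ha1, ((hR l).2 C hC).2 x hx]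
  refine ⟨Function.update R l (insert (insert a (C.erase b)) ((R l).erase C)), fun j => ?_,
    funext fun x => ?_⟩
  · rcases eq_or_ne j l with rfl | h
    · rw [Function.update_self]
      exact (hR j).insert_erase hC hC' hcard hpos
    · rw [Function.update_of_ne h]
      exact hR j
  · have h1 := tupMult_update R l (insert (insert a (C.erase b)) ((R l).erase C)) x
    have h2 := famMult_insert_erase hC hC' x
    have h3 : (if x ∈ insert a (C.erase b) then 1 else 0) + Pi.single (M := fun _ => ℕ) b 1 x =
        (if x ∈ C then 1 else 0) + Pi.single (M := fun _ => ℕ) a 1 x := by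
      simp only [Pi.single_apply, mem_insert, mem_erase]
      by_cases hxa : x = a
      · subst hxa; simp [ha, show x ≠ b by rintro rfl; exact ha hb]
      · by_cases hxb : x = b <;> simp_all
    simp only [Pi.add_apply]
    omega

lemma apply_eq_of_add_single_eq {f g : ℕ → ℕ} {p q : ℕ} (hpq : p ≠ q)
    (hmove : g + Pi.single q 1 = f + Pi.single p 1) : g q + 1 = f q ∧ g p = f p + 1 := by
  have eq := congrFun hmove q
  have ep := congrFun hmove p
  simp only [Pi.add_apply, Pi.single_apply, if_pos, hpq, hpq.symm, if_false] at eq ep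
  omega

lemma add_single_eq_of_add_single_eq {f g g' : ℕ → ℕ} {p q i : ℕ}
    (hmove : g + Pi.single q 1 = f + Pi.single p 1)
    (hswap : g' + Pi.single p 1 = g + Pi.single i 1) :
    g' + Pi.single q 1 = f + Pi.single i 1 :=
  add_right_cancel (b := Pi.single p 1) <| by
    rw [add_right_comm, hswap, add_right_comm, hmove, add_right_comm]

lemma eq_or_eq_of_lt_succ {f g : ℕ → ℕ} {p q i : ℕ} (hf : TypeDefined f)
    (hmove : g + Pi.single q 1 = f + Pi.single p 1) (hi : 1 ≤ i) (hlt : g i < g (i + 1)) :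
    i + 1 = p ∨ i = q := by
  have e0 := congrFun hmove i
  have e1 := congrFun hmove (i + 1)
  have hfi := hf i (i + 1) hi (Nat.le_succ i)
  simp only [Pi.add_apply, Pi.single_apply] at e0 e1
  by_contra! h
  split_ifs at e0 e1 <;> omega

lemma typeDefined_of_succ_le {f : ℕ → ℕ} (h : ∀ i, 1 ≤ i → f (i + 1) ≤ f i) :
    TypeDefined f := by
  intro i j hi hij
  induction j, hij using Nat.le_induction with
  | base => exact le_rfl
  | succ j hij ih => exact (h j (hi.trans hij)).trans ih

/-- Each repair pushes an end of the move outwards (`p ↦ p - 1` or `q ↦ q + 1`); as `f q ≥ 1`,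
the right end stays below the bound `N` of the support of `f`, so `p + (N - q)` decreases. -/
lemma exists_typeDefined_of_add_single_eq {m k : ℕ} {n : Fin k → ℕ} {f : ℕ → ℕ}
    (hf : TypeDefined f) (hfin : (Function.support f).Finite) {R : Fin k → Finset (Finset ℕ)}
    (hR : ∀ j, IsSetFamily m (n j) (R j)) {p q : ℕ} (hp : 1 ≤ p) (hpq : p < q)
    (hmove : tupMult R + Pi.single q 1 = f + Pi.single p 1) :
    ∃ R' : Fin k → Finset (Finset ℕ), ∃ p' q', (∀ j, IsSetFamily m (n j) (R' j)) ∧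
      TypeDefined (tupMult R') ∧ 1 ≤ p' ∧ p' < q' ∧
        tupMult R' + Pi.single q' 1 = f + Pi.single p' 1 := by
  obtain ⟨N, hN⟩ := hfin.bddAbove
  have hq_le : ∀ {g : ℕ → ℕ} {p q}, p < q → g + Pi.single q 1 = f + Pi.single p 1 →
      q ≤ N :=
    fun hpq hmove => hN <| by
      simp only [Function.mem_support]
      have := (apply_eq_of_add_single_eq hpq.ne hmove).1
      omega
  induction hμ : p + (N - q) using Nat.strong_induction_on generalizing R p q with
  | _ μ IH =>
    by_cases hRt : TypeDefined (tupMult R)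
    · exact ⟨R, p, q, hR, hRt, hp, hpq, hmove⟩
    obtain ⟨i, hi, hlt⟩ : ∃ i, 1 ≤ i ∧ tupMult R i < tupMult R (i + 1) := by
      by_contra! h
      exact hRt (typeDefined_of_succ_le h)
    obtain ⟨l, C, hC, hi1, hi0, hC'⟩ := exists_insert_erase_notMem_of_lt R hlt
    obtain ⟨R', hR', hswap⟩ := exists_tupMult_add_single_eq hR hC hi1 hi0 hi hC'
    rcases eq_or_eq_of_lt_succ hf hmove hi hlt with rfl | rfl
    · exact IH _ (by omega) hR' hi (by omega) (add_single_eq_of_add_single_eq hmove hswap) rfl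
    · have hmove' := hswap.trans hmove
      have := hq_le (by omega) hmove'
      exact IH _ (by omega) hR' hp (by omega) hmove' rfl

lemma support_tupMult_finite_s1 {k : ℕ} (R : Fin k → Finset (Finset ℕ)) :
    (Function.support (tupMult R)).Finite := by
  refine (univ.biUnion fun j => (R j).sup id).finite_toSet.subset fun x hx => ?_
  obtain ⟨j, -, hj⟩ := exists_ne_zero_of_sum_ne_zero hx
  obtain ⟨S, hS⟩ := card_ne_zero.1 hj
  rw [mem_filter] at hS
  simp only [coe_biUnion, coe_univ, Set.mem_univ, Set.iUnion_true, Set.mem_iUnion, mem_coe]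
  exact ⟨j, mem_sup.2 ⟨S, hS.1, hS.2⟩⟩

lemma partSum_le_of_add_single_eq {f g : ℕ → ℕ} (hf : (Function.support f).Finite)
    (hg : (Function.support g).Finite) {p q : ℕ} (hpq : p ≠ q) (hfqp : f q ≤ f p)
    (hmove : g + Pi.single q 1 = f + Pi.single p 1) (j : ℕ) :
    partSum g j ≤ partSum f j := by
  obtain ⟨hq, hp⟩ := apply_eq_of_add_single_eq hpq hmove
  set s := hf.toFinset ∪ hg.toFinset
  have hsupp : ∀ h : ℕ → ℕ, Function.support h ⊆ s →
      Function.support (fun x => min (h x) j) ⊆ s := fun h hh x hx =>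
    hh fun h0 => hx (by simp [h0])
  rw [partSum, partSum, finsum_eq_sum_of_support_subset _ (hsupp g (by simp [s])),
    finsum_eq_sum_of_support_subset _ (hsupp f (by simp [s]))]
  have hps : p ∈ s := by simp [s]; omega
  have hqs : q ∈ s.erase p := mem_erase.2 ⟨hpq.symm, by simp [s]; omega⟩
  rw [← add_sum_erase s _ hps, ← add_sum_erase _ _ hqs, ← add_sum_erase s _ hps,
    ← add_sum_erase _ _ hqs]
  have hrest : ∑ x ∈ (s.erase p).erase q, min (g x) j =
      ∑ x ∈ (s.erase p).erase q, min (f x) j :=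
    sum_congr rfl fun x hx => by
      have := congrFun hmove x
      simp only [mem_erase] at hx
      simp_all
  omega

lemma conjStrictDom_of_add_single_eq {f g : ℕ → ℕ} (hf : TypeDefined f)
    (hffin : (Function.support f).Finite) (hgfin : (Function.support g).Finite) {p q : ℕ}
    (hp : 1 ≤ p) (hpq : p < q) (hmove : g + Pi.single q 1 = f + Pi.single p 1) :
    ConjStrictDom g f :=
  ⟨partSum_le_of_add_single_eq hffin hgfin hpq.ne (hf p q hp hpq.le) hmove, p, hp, by
    have := (apply_eq_of_add_single_eq hpq.ne hmove).2
    omega⟩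

/-- Every minimal set family tuple is closed. -/
theorem stmt_1 (m k : ℕ) (n : Fin k → ℕ) (P : Fin k → Finset (Finset ℕ))
    (hP : ∀ j, IsSetFamily m (n j) (P j))
    (htype : TypeDefined (tupMult P))
    (hmin : ¬ ∃ R : Fin k → Finset (Finset ℕ),
      (∀ j, IsSetFamily m (n j) (R j)) ∧ TypeDefined (tupMult R) ∧
        ConjStrictDom (tupMult R) (tupMult P)) :
    ∀ j, ClosedFam m (P j) := by
  intro j
  by_contra hnc
  obtain ⟨B, hB, b, hb, hb2, hb1, hB'⟩ := exists_insert_pred_erase_notMem (hP j) hnc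
  obtain ⟨R, hR, hmove⟩ := exists_tupMult_add_single_eq hP hB hb hb1 (by omega) hB'
  obtain ⟨R', p, q, hR', hR't, hp, hpq, hmove'⟩ := exists_typeDefined_of_add_single_eq htype
    (support_tupMult_finite_s1 P) hR (by omega) (by omega) hmove
  exact hmin ⟨R', hR', hR't, conjStrictDom_of_add_single_eq htype (support_tupMult_finite_s1 P)
    (support_tupMult_finite_s1 R') hp hpq hmove'⟩
end

section
/- If (P_1,…,P_k) is a minimal set family tuple with each P_j of shape (m^{n_j}), then each individual set family P_j is minimal; that is, P_j has a defined type λ^{(j)} and no set family of shape (m^{n_j}) has a defined type strictly dominated by λ^{(j)}. -/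
/-! If some `P j` had no type, there are `i < i'` with `famMult (P j) i < famMult (P j) i'`;
swapping `i` and `i'` inside `P j` moves multiplicity of the tuple from `i'` onto the at least as
frequent `i`, which strictly lowers the tuple's type in dominance order, and sorting the positive
integers by the new multiplicity yields a tuple with a defined type, contradicting minimality.

Once every `P j` has a type, the type of the tuple is the union of these types, and `λ ↦ λ ∪ ν`
is monotone for dominance: the first `t` parts of `λ ∪ ν` are the first `a` parts of `λ` and the
first `t - a` parts of `ν` for a suitable `a`. So a family strictly below `P j` would give a tuple
strictly below `P`. -/

open Finset Function

theorem exists_perm_antitoneOn_comp {α β : Type*} [LinearOrder α] [LinearOrder β]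
    (s : Finset α) (u : α → β) :
    ∃ ρ : Equiv.Perm α, (∀ x ∉ s, ρ x = x) ∧ AntitoneOn (u ∘ ρ) s := by
  classical
  let e : Fin s.card ≃o s := s.orderIsoOfFin rfl
  let σ := Tuple.sort fun k => OrderDual.toDual (u (e k))
  have hσ : Monotone fun k => OrderDual.toDual (u (e (σ k))) :=
    Tuple.monotone_sort fun k => OrderDual.toDual (u (e k))
  refine ⟨σ.extendDomain e.toEquiv, fun x hx => ?_, fun x hx y hy hxy => ?_⟩
  · exact Equiv.Perm.extendDomain_apply_not_subtype _ _ hx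
  · simp only [comp_apply, Equiv.Perm.extendDomain_apply_subtype _ e.toEquiv (Finset.mem_coe.1 hx),
      Equiv.Perm.extendDomain_apply_subtype _ e.toEquiv (Finset.mem_coe.1 hy)]
    exact hσ (e.symm.monotone (show (⟨x, hx⟩ : s) ≤ ⟨y, hy⟩ from hxy))

theorem exists_min_add_le_min_add_min {α : Type*} [LinearOrder α] {s : Set α} {g h : α → ℕ}
    (hg : AntitoneOn g s) (hh : AntitoneOn h s) (t : ℕ) :
    ∃ a ≤ t, ∀ x ∈ s, min (g x + h x) t ≤ min (g x) a + min (h x) (t - a) := by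
  classical
  let C : ℕ → Prop := fun a => a ≤ t ∧ ∀ x ∈ s, a + 1 ≤ g x → t - a ≤ h x
  have hC : ∃ a, C a := ⟨t, le_rfl, fun x _ _ => by omega⟩
  obtain ⟨hat, hlow⟩ := Nat.find_spec hC
  set a := Nat.find hC
  have hhigh : ∀ x ∈ s, t - a + 1 ≤ h x → a ≤ g x := by
    intro x hx hhx
    rcases Nat.eq_zero_or_pos a with ha | ha
    · omega
    obtain ⟨y, hy, hgy, hhy⟩ : ∃ y ∈ s, a ≤ g y ∧ h y < t - (a - 1) := by
      have := Nat.find_min hC (Nat.sub_lt ha one_pos)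
      simp only [C, not_and, not_forall, not_le] at this
      obtain ⟨y, hy, hgy, hhy⟩ := this (by omega)
      exact ⟨y, hy, by omega, hhy⟩
    have hxy : x ≤ y := le_of_lt <| lt_of_not_ge fun hyx => by
      have := hh hy hx hyx
      omega
    exact hgy.trans (hg hx hy hxy)
  exact ⟨a, hat, fun x hx => by
    have := hlow x hx
    have := hhigh x hx
    omega⟩

theorem typeDefined_iff_antitoneOn {f : ℕ → ℕ} : TypeDefined f ↔ AntitoneOn f (Set.Ici 1) :=
  ⟨fun h _ hi _ _ hij => h _ _ hi hij, fun h _ _ hi hij => h hi (le_trans hi hij) hij⟩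

theorem partSum_comp_perm (f : ℕ → ℕ) (ρ : Equiv.Perm ℕ) (t : ℕ) :
    partSum (f ∘ ρ) t = partSum f t :=
  finsum_comp_equiv ρ (f := fun x => min (f x) t)

section Supported

variable {N : ℕ}

theorem partSum_eq_sum_Icc {f : ℕ → ℕ} (hf : support f ⊆ Set.Icc 1 N) (t : ℕ) :
    partSum f t = ∑ x ∈ Finset.Icc 1 N, min (f x) t := by
  refine finsum_eq_sum_of_support_subset _ fun x hx => ?_
  rw [Finset.coe_Icc]
  exact hf fun hfx => hx (by simp [hfx])

theorem ConjDom.add_right {f g h : ℕ → ℕ} (hgf : ConjDom g f) (hg : TypeDefined g)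
    (hh : TypeDefined h) (hfN : support f ⊆ Set.Icc 1 N) (hgN : support g ⊆ Set.Icc 1 N)
    (hhN : support h ⊆ Set.Icc 1 N) : ConjDom (g + h) (f + h) := by
  have hsupp {u v : ℕ → ℕ} (hu : support u ⊆ Set.Icc 1 N) (hv : support v ⊆ Set.Icc 1 N) :
      support (u + v) ⊆ Set.Icc 1 N :=
    (support_add u v).trans (Set.union_subset hu hv)
  intro t
  have hIcc : (↑(Finset.Icc 1 N) : Set ℕ) ⊆ Set.Ici 1 := by
    rw [Finset.coe_Icc]; exact Set.Icc_subset_Ici_self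
  obtain ⟨a, hat, hsplit⟩ := exists_min_add_le_min_add_min
    ((typeDefined_iff_antitoneOn.1 hg).mono hIcc) ((typeDefined_iff_antitoneOn.1 hh).mono hIcc) t
  calc partSum (g + h) t
      ≤ ∑ x ∈ Finset.Icc 1 N, (min (g x) a + min (h x) (t - a)) := by
        rw [partSum_eq_sum_Icc (hsupp hgN hhN)]
        exact Finset.sum_le_sum fun x hx => hsplit x hx
    _ = partSum g a + partSum h (t - a) := by
        rw [Finset.sum_add_distrib, partSum_eq_sum_Icc hgN, partSum_eq_sum_Icc hhN]
    _ ≤ partSum f a + partSum h (t - a) := Nat.add_le_add_right (hgf a) _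
    _ = ∑ x ∈ Finset.Icc 1 N, (min (f x) a + min (h x) (t - a)) := by
        rw [Finset.sum_add_distrib, partSum_eq_sum_Icc hfN, partSum_eq_sum_Icc hhN]
    _ ≤ partSum (f + h) t := by
        rw [partSum_eq_sum_Icc (hsupp hfN hhN)]
        exact Finset.sum_le_sum fun x _ => by simp only [Pi.add_apply]; omega

theorem conjDom_and_partSum_lt_of_transfer {u v : ℕ → ℕ} {i i' δ : ℕ} (hne : i ≠ i')
    (hu : support u ⊆ Set.Icc 1 N) (hv : support v ⊆ Set.Icc 1 N)
    (hui : u i = v i + δ) (hui' : u i' + δ = v i') (hoff : ∀ x, x ≠ i → x ≠ i' → u x = v x)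
    (hvv : v i' ≤ v i) (hδ : 0 < δ) :
    ConjDom u v ∧ partSum u (v i') < partSum v (v i') := by
  have hmem {x} (hx : 0 < v x) : x ∈ Finset.Icc 1 N := by
    rw [← Finset.mem_coe, Finset.coe_Icc]; exact hv hx.ne'
  have hpair : {i, i'} ⊆ Finset.Icc 1 N :=
    Finset.insert_subset (hmem (by omega)) (Finset.singleton_subset_iff.2 (hmem (by omega)))
  have hsplit (w : ℕ → ℕ) (hw : support w ⊆ Set.Icc 1 N) (t : ℕ) : partSum w t =
      ∑ x ∈ Finset.Icc 1 N \ {i, i'}, min (w x) t + (min (w i) t + min (w i') t) := by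
    rw [partSum_eq_sum_Icc hw, ← Finset.sum_sdiff hpair, Finset.sum_pair hne]
  have hrest (t : ℕ) : ∑ x ∈ Finset.Icc 1 N \ {i, i'}, min (u x) t =
      ∑ x ∈ Finset.Icc 1 N \ {i, i'}, min (v x) t :=
    Finset.sum_congr rfl fun x hx => by
      simp only [Finset.mem_sdiff, Finset.mem_insert, Finset.mem_singleton, not_or] at hx
      rw [hoff x hx.2.1 hx.2.2]
  refine ⟨fun t => ?_, ?_⟩ <;> (rw [hsplit u hu, hsplit v hv, hrest]; omega)

end Supported

theorem famMult_map_perm (P : Finset (Finset ℕ)) (ρ : Equiv.Perm ℕ) (x : ℕ) :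
    famMult (P.map ρ.finsetCongr.toEmbedding) x = famMult P (ρ.symm x) := by
  unfold famMult
  rw [Finset.filter_map, Finset.card_map]
  congr 1
  exact Finset.filter_congr fun S _ => by simp [Equiv.finsetCongr_apply, Finset.mem_map_equiv]

theorem IsSetFamily.map_perm {m n : ℕ} {P : Finset (Finset ℕ)} (hP : IsSetFamily m n P)
    {ρ : Equiv.Perm ℕ} (hρ : ρ 0 = 0) : IsSetFamily m n (P.map ρ.finsetCongr.toEmbedding) := by
  refine ⟨by rw [Finset.card_map, hP.1], fun S hS => ?_⟩
  obtain ⟨T, hT, rfl⟩ := Finset.mem_map.1 hS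
  refine ⟨by simp [Equiv.finsetCongr_apply, (hP.2 T hT).1], fun x hx => ?_⟩
  have := (hP.2 T hT).2 (ρ.symm x) (by simpa [Equiv.finsetCongr_apply] using hx)
  refine Nat.one_le_iff_ne_zero.2 fun h0 => ?_
  rw [h0, ρ.symm_apply_eq.2 hρ.symm] at this
  omega

theorem famMult_zero {m n : ℕ} {P : Finset (Finset ℕ)} (hP : IsSetFamily m n P) :
    famMult P 0 = 0 :=
  Finset.card_eq_zero.2 <| Finset.filter_eq_empty_iff.2 fun S hS h0 => by
    have := (hP.2 S hS).2 0 h0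
    omega

theorem support_famMult_subset {P : Finset (Finset ℕ)} {N : ℕ}
    (hP : ∀ S ∈ P, S ⊆ Finset.Icc 1 N) : support (famMult P) ⊆ Set.Icc 1 N := by
  intro x hx
  obtain ⟨S, hS⟩ := Finset.card_ne_zero.1 hx
  rw [Finset.mem_filter] at hS
  simpa using hP S hS.1 hS.2

theorem exists_forall_subset_Icc {T : Finset (Finset ℕ)} (hT : ∀ S ∈ T, ∀ x ∈ S, 1 ≤ x) :
    ∃ N, ∀ S ∈ T, S ⊆ Finset.Icc 1 N :=
  ⟨(T.biUnion id).sup id, fun S hS x hx => Finset.mem_Icc.2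
    ⟨hT S hS x hx, Finset.le_sup (f := id) (Finset.mem_biUnion.2 ⟨S, hS, hx⟩)⟩⟩

section Tuple

variable {k : ℕ}

theorem tupMult_update_s2 (P : Fin k → Finset (Finset ℕ)) (j₀ : Fin k) (Q : Finset (Finset ℕ))
    (x : ℕ) : tupMult (update P j₀ Q) x = famMult Q x + ∑ j ∈ univ.erase j₀, famMult (P j) x := by
  unfold tupMult
  rw [← Finset.add_sum_erase _ _ (Finset.mem_univ j₀), update_self]
  congr 1
  exact Finset.sum_congr rfl fun j hj => by rw [update_of_ne (Finset.ne_of_mem_erase hj)]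

theorem tupMult_eq_add_sum_erase (P : Fin k → Finset (Finset ℕ)) (j₀ : Fin k) (x : ℕ) :
    tupMult P x = famMult (P j₀) x + ∑ j ∈ univ.erase j₀, famMult (P j) x := by
  rw [← tupMult_update_s2, update_eq_self]

theorem tupMult_map_perm (P : Fin k → Finset (Finset ℕ)) (ρ : Equiv.Perm ℕ) (x : ℕ) :
    tupMult (fun j => (P j).map ρ.finsetCongr.toEmbedding) x = tupMult P (ρ.symm x) :=
  Finset.sum_congr rfl fun j _ => famMult_map_perm (P j) ρ x

theorem support_tupMult_subset {P : Fin k → Finset (Finset ℕ)} {N : ℕ}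
    (hP : ∀ j, ∀ S ∈ P j, S ⊆ Finset.Icc 1 N) : support (tupMult P) ⊆ Set.Icc 1 N := by
  intro x hx
  obtain ⟨j, -, hj⟩ := Finset.exists_ne_zero_of_sum_ne_zero hx
  exact support_famMult_subset (hP j) hj

theorem tupMult_zero {m : ℕ} {n : Fin k → ℕ} {P : Fin k → Finset (Finset ℕ)}
    (hP : ∀ j, IsSetFamily m (n j) (P j)) : tupMult P 0 = 0 :=
  Finset.sum_eq_zero fun j _ => famMult_zero (hP j)

end Tuple

theorem conjStrictDom_of_partSum_lt {f g : ℕ → ℕ} {t : ℕ} (hdom : ConjDom g f) (h0 : g 0 = f 0)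
    (hlt : partSum g t < partSum f t) : ConjStrictDom g f := by
  refine ⟨hdom, ?_⟩
  by_contra! h
  obtain rfl : g = f := funext fun
    | 0 => h0
    | x + 1 => h (x + 1) (Nat.succ_pos x)
  exact lt_irrefl _ hlt

/-- `P` is a minimal set family tuple; having a defined type is not part of this condition. -/
def IsMinimalTuple (m : ℕ) {k : ℕ} (n : Fin k → ℕ) (P : Fin k → Finset (Finset ℕ)) : Prop :=
  ¬ ∃ R : Fin k → Finset (Finset ℕ),
    (∀ j, IsSetFamily m (n j) (R j)) ∧ TypeDefined (tupMult R) ∧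
      ConjStrictDom (tupMult R) (tupMult P)

section Minimal

variable {m k : ℕ} {n : Fin k → ℕ} {P : Fin k → Finset (Finset ℕ)}

theorem exists_typeDefined_rearrangement {Q : Fin k → Finset (Finset ℕ)}
    (hQ : ∀ j, IsSetFamily m (n j) (Q j)) {N : ℕ} (hN : support (tupMult Q) ⊆ Set.Icc 1 N) :
    ∃ R : Fin k → Finset (Finset ℕ), (∀ j, IsSetFamily m (n j) (R j)) ∧
      TypeDefined (tupMult R) ∧ ∀ t, partSum (tupMult R) t = partSum (tupMult Q) t := by
  obtain ⟨ρ, hfix, hanti⟩ := exists_perm_antitoneOn_comp (Finset.Icc 1 N) (tupMult Q)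
  have hρ0 : ρ 0 = 0 := hfix 0 (by simp)
  have hR : tupMult (fun j => (Q j).map ρ.symm.finsetCongr.toEmbedding) = tupMult Q ∘ ρ :=
    funext fun x => by rw [tupMult_map_perm, Equiv.symm_symm, comp_apply]
  refine ⟨fun j => (Q j).map ρ.symm.finsetCongr.toEmbedding,
    fun j => (hQ j).map_perm (ρ.symm_apply_eq.2 hρ0.symm), ?_, fun t => ?_⟩
  · rw [hR]
    intro x y hx hxy
    by_cases hyN : y ≤ N
    · exact hanti (by simp only [coe_Icc, Set.mem_Icc]; omega)
        (by simp only [coe_Icc, Set.mem_Icc]; omega) hxy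
    · have hy : y ∉ Finset.Icc 1 N := by rw [Finset.mem_Icc]; omega
      have hy0 : tupMult Q y = 0 := notMem_support.1 fun h => hy (by simpa using hN h)
      rw [comp_apply, hfix y hy, hy0]
      exact Nat.zero_le _
  · rw [hR, partSum_comp_perm]

theorem exists_lower_tuple_of_not_typeDefined_famMult (hP : ∀ j, IsSetFamily m (n j) (P j))
    (htype : TypeDefined (tupMult P)) {j₀ : Fin k} (hnot : ¬ TypeDefined (famMult (P j₀))) :
    ∃ (Q : Fin k → Finset (Finset ℕ)) (N : ℕ), (∀ j, IsSetFamily m (n j) (Q j)) ∧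
      support (tupMult Q) ⊆ Set.Icc 1 N ∧ ConjDom (tupMult Q) (tupMult P) ∧
        ∃ t, partSum (tupMult Q) t < partSum (tupMult P) t := by
  simp only [TypeDefined, not_forall, not_le] at hnot
  obtain ⟨i, i', hi, hii', hlt⟩ := hnot
  obtain ⟨N, hN⟩ := exists_forall_subset_Icc (T := univ.biUnion P) fun S hS => by
    obtain ⟨j, -, hj⟩ := Finset.mem_biUnion.1 hS
    exact ((hP j).2 S hj).2
  have hPN : support (tupMult P) ⊆ Set.Icc 1 N :=
    support_tupMult_subset fun j S hS => hN S (Finset.mem_biUnion.2 ⟨j, Finset.mem_univ j, hS⟩)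
  have hi'N : i' ∈ Set.Icc 1 N := hPN (by rw [mem_support, tupMult_eq_add_sum_erase P j₀]; omega)
  have hiN : i ∈ Set.Icc 1 N := ⟨hi, hii'.trans hi'N.2⟩
  have hne : i ≠ i' := by rintro rfl; omega
  have hswap0 : Equiv.swap i i' 0 = 0 := Equiv.swap_apply_of_ne_of_ne (by omega) (by omega)
  set Q := update P j₀ ((P j₀).map (Equiv.swap i i').finsetCongr.toEmbedding)
  have hQP (x : ℕ) :
      tupMult Q x + famMult (P j₀) x = tupMult P x + famMult (P j₀) (Equiv.swap i i' x) := by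
    rw [tupMult_update_s2, famMult_map_perm, Equiv.symm_swap, tupMult_eq_add_sum_erase P j₀]
    omega
  have hoff (x : ℕ) (hxi : x ≠ i) (hxi' : x ≠ i') : tupMult Q x = tupMult P x := by
    have := hQP x
    rw [Equiv.swap_apply_of_ne_of_ne hxi hxi'] at this
    omega
  have hQN : support (tupMult Q) ⊆ Set.Icc 1 N := fun x hx => by
    rcases eq_or_ne x i with rfl | hxi
    · exact hiN
    rcases eq_or_ne x i' with rfl | hxi'
    · exact hi'N
    exact hPN (by rwa [mem_support, ← hoff x hxi hxi'])
  obtain ⟨hdom, hlt⟩ := conjDom_and_partSum_lt_of_transfer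
    (δ := famMult (P j₀) i' - famMult (P j₀) i) hne hQN hPN
    (by have := hQP i; rw [Equiv.swap_apply_left] at this; omega)
    (by have := hQP i'; rw [Equiv.swap_apply_right] at this; omega)
    hoff (htype i i' hi hii') (by omega)
  refine ⟨Q, N, fun j => ?_, hQN, hdom, _, hlt⟩
  rcases eq_or_ne j j₀ with rfl | hj
  · simpa [Q] using (hP j).map_perm hswap0
  · simpa [Q, hj] using hP j

theorem typeDefined_famMult_of_isMinimalTuple (hP : ∀ j, IsSetFamily m (n j) (P j))
    (htype : TypeDefined (tupMult P)) (hmin : IsMinimalTuple m n P) (j₀ : Fin k) :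
    TypeDefined (famMult (P j₀)) := by
  by_contra hnot
  obtain ⟨Q, N, hQ, hQN, hdom, t, hlt⟩ :=
    exists_lower_tuple_of_not_typeDefined_famMult hP htype hnot
  obtain ⟨R, hR, hRtype, hRsum⟩ := exists_typeDefined_rearrangement hQ hQN
  refine hmin ⟨R, hR, hRtype, conjStrictDom_of_partSum_lt (fun t => (hRsum t).trans_le (hdom t))
    ?_ ((hRsum t).trans_lt hlt)⟩
  rw [tupMult_zero hR, tupMult_zero hP]

theorem not_conjStrictDom_famMult_of_isMinimalTuple (hP : ∀ j, IsSetFamily m (n j) (P j))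
    (htype : TypeDefined (tupMult P)) (hmin : IsMinimalTuple m n P) (j₀ : Fin k) :
    ¬ ∃ R : Finset (Finset ℕ), IsSetFamily m (n j₀) R ∧ TypeDefined (famMult R) ∧
      ConjStrictDom (famMult R) (famMult (P j₀)) := by
  rintro ⟨R, hR, hRtype, hdom, x₀, hx₀, hne⟩
  obtain ⟨N, hN⟩ := exists_forall_subset_Icc (T := univ.biUnion P ∪ R) fun S hS => by
    rcases Finset.mem_union.1 hS with hS | hS
    · obtain ⟨j, -, hj⟩ := Finset.mem_biUnion.1 hS
      exact ((hP j).2 S hj).2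
    · exact (hR.2 S hS).2
  have hPjN (j : Fin k) : ∀ S ∈ P j, S ⊆ Finset.Icc 1 N := fun S hS =>
    hN S (Finset.mem_union_left _ (Finset.mem_biUnion.2 ⟨j, Finset.mem_univ j, hS⟩))
  set rest := fun x => ∑ j ∈ univ.erase j₀, famMult (P j) x
  have hPt : tupMult P = famMult (P j₀) + rest := funext (tupMult_eq_add_sum_erase P j₀)
  have hRt : tupMult (update P j₀ R) = famMult R + rest := funext (tupMult_update_s2 P j₀ R)
  have hPN : support (tupMult P) ⊆ Set.Icc 1 N := support_tupMult_subset hPjN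
  have hrestN : support rest ⊆ Set.Icc 1 N := fun x hx =>
    hPN (by rw [mem_support, hPt, Pi.add_apply]; exact fun h => hx (by omega))
  have hrest : TypeDefined rest := fun a b ha hab => Finset.sum_le_sum fun j _ =>
    typeDefined_famMult_of_isMinimalTuple hP htype hmin j a b ha hab
  refine hmin ⟨update P j₀ R, fun j => ?_, ?_, ?_, x₀, hx₀, ?_⟩
  · rcases eq_or_ne j j₀ with rfl | hj
    · simpa using hR
    · simpa [hj] using hP j
  · rw [hRt]
    exact fun a b ha hab => Nat.add_le_add (hRtype a b ha hab) (hrest a b ha hab)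
  · rw [hRt, hPt]
    exact hdom.add_right hRtype hrest (support_famMult_subset (hPjN j₀))
      (support_famMult_subset fun S hS => hN S (Finset.mem_union_right _ hS)) hrestN
  · rw [hRt, hPt]
    simpa using hne

end Minimal

/-- In a minimal set family tuple, each individual set family has a defined
type and is itself minimal. -/
theorem stmt_2 (m k : ℕ) (n : Fin k → ℕ) (P : Fin k → Finset (Finset ℕ))
    (hP : ∀ j, IsSetFamily m (n j) (P j))
    (htype : TypeDefined (tupMult P))
    (hmin : ¬ ∃ R : Fin k → Finset (Finset ℕ),
      (∀ j, IsSetFamily m (n j) (R j)) ∧ TypeDefined (tupMult R) ∧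
        ConjStrictDom (tupMult R) (tupMult P)) :
    ∀ j, TypeDefined (famMult (P j)) ∧
      ¬ ∃ R : Finset (Finset ℕ), IsSetFamily m (n j) R ∧ TypeDefined (famMult R) ∧
          ConjStrictDom (famMult R) (famMult (P j)) := fun j =>
  ⟨typeDefined_famMult_of_isMinimalTuple hP htype hmin j,
    not_conjStrictDom_famMult_of_isMinimalTuple hP htype hmin j⟩
end

section
/- Every minimal multiset family tuple is closed: if (Q_1,…,Q_k) is a multiset family tuple with defined type λ, each Q_j of shape (m^{n_j}), and there is no multiset family tuple (R_1,…,R_k) with each R_j of shape (m^{n_j}) whose type is defined and strictly dominated by λ, then every Q_j is closed. -/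
/-!
Write `c_t(S)` for the number of entries of a multiset `S` exceeding `t`. For multisets of
equal size, `A ⪯ B` holds iff `c_t(A) ≤ c_t(B)` for all `t`. Hence a family is closed as soon as
it is closed under the elementary move replacing one entry `x + 1 ≥ 2` by `x`, and closed
families have weakly decreasing multiplicities.

If some `Q_j` is not closed, apply an elementary move `x + 1 ↦ x` to a multiset of `Q_j` whose
image is not in `Q_j`, and keep applying such moves to the resulting tuple while possible (each
one lowers the sum of all entries). The final tuple `R` has the shape of `Q`, every `R_j` is
closed, so `R` has a type, and `Σ_j Σ_{S ∈ R_j} c_t(S)` is at most the same quantity for `Q`,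
strictly so for `t = x`. Since `λ'` is weakly decreasing, these tail inequalities give that the
type of `R` is strictly dominated by `λ`, contradicting minimality.
-/

/-- The multiplicity of `i` in a multiset family `Q`: the total number of occurrences of `i`,
counted with multiplicity, among the multisets in `Q`. -/
def msetMult (Q : Finset (Multiset ℕ)) (i : ℕ) : ℕ := ∑ S ∈ Q, S.count i

/-- `Q` is a multiset family of shape `(m^n)`: a collection of `n` distinct multisets of
cardinality `m` with elements in the positive integers. -/
def IsMsetFamily (m n : ℕ) (Q : Finset (Multiset ℕ)) : Prop :=
  Q.card = n ∧ ∀ S ∈ Q, Multiset.card S = m ∧ ∀ x ∈ S, 1 ≤ x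

/-- `B` majorizes `A` (written `A ⪯ B`) for multisets: the `r`-th smallest element of `A`
is at most the `r`-th smallest element of `B`. -/
def MsetMaj (A B : Multiset ℕ) : Prop :=
  ∀ r : ℕ, (A.sort (· ≤ ·)).getD r 0 ≤ (B.sort (· ≤ ·)).getD r 0

/-- A multiset family (of cardinality-`m` multisets) is closed if it is downward closed
under majorization. -/
def ClosedMsetFam (m : ℕ) (Q : Finset (Multiset ℕ)) : Prop :=
  ∀ B ∈ Q, ∀ A : Multiset ℕ, Multiset.card A = m → (∀ x ∈ A, 1 ≤ x) → MsetMaj A B → A ∈ Q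

/-- The total multiplicity of `i` over a tuple of multiset families. -/
def msetTupMult {k : ℕ} (Q : Fin k → Finset (Multiset ℕ)) (i : ℕ) : ℕ := ∑ j, msetMult (Q j) i
open Multiset

lemma countP_lt_replicate (t k a : ℕ) :
    (replicate k a).countP (t < ·) = if t < a then k else 0 := by
  rw [← coe_replicate, coe_countP, List.countP_replicate]
  simp

lemma countP_lt_eq_countP_succ_lt_add_count (S : Multiset ℕ) (t : ℕ) :
    S.countP (t < ·) = S.countP (t + 1 < ·) + S.count (t + 1) := by
  induction S using Multiset.induction_on with
  | empty => simp
  | cons a S ih =>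
    simp only [countP_cons, count_cons, ih]
    split_ifs <;> omega

lemma eq_of_countP_lt_eq {A B : Multiset ℕ} (hcard : card A = card B)
    (hA : ∀ y ∈ A, 1 ≤ y) (h : ∀ t, A.countP (t < ·) = B.countP (t < ·)) : A = B := by
  have hB : ∀ y ∈ B, 0 < y :=
    countP_eq_card.mp (by rw [← h, ← hcard]; exact countP_eq_card.mpr hA)
  ext y
  cases y with
  | zero =>
    rw [count_eq_zero.mpr fun h0 => by simpa using hA 0 h0,
      count_eq_zero.mpr fun h0 => by simpa using hB 0 h0]
  | succ t =>
    have hA' := countP_lt_eq_countP_succ_lt_add_count A t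
    have hB' := countP_lt_eq_countP_succ_lt_add_count B t
    rw [h, h] at hA'
    omega

lemma countP_lt_eq_sum_Ioc_count {S : Multiset ℕ} {Y : ℕ} (hS : ∀ x ∈ S, x ≤ Y) (t : ℕ) :
    S.countP (t < ·) = ∑ x ∈ Finset.Ioc t Y, S.count x := by
  induction S using Multiset.induction_on with
  | empty => simp
  | cons a S ih =>
    rw [countP_cons, ih fun x hx => hS x (mem_cons_of_mem hx)]
    simp only [count_cons, Finset.sum_add_distrib, Finset.sum_ite_eq', Finset.mem_Ioc]
    have := hS a (mem_cons_self a S)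
    by_cases hta : t < a <;> simp [hta, this]

lemma List.Pairwise.lt_getElem_iff {l : List ℕ} (hl : l.Pairwise (· ≤ ·)) (t : ℕ) {r : ℕ}
    (hr : r < l.length) : t < l[r] ↔ l.length - r ≤ l.countP (t < ·) := by
  induction l generalizing r with
  | nil => simp at hr
  | cons a l ih =>
    rw [List.pairwise_cons] at hl
    have hall : t < a → ∀ b ∈ a :: l, t < b := by
      intro ha b hb
      rcases List.mem_cons.mp hb with rfl | hb
      exacts [ha, ha.trans_le (hl.1 b hb)]
    have hcount : t < a → (a :: l).countP (t < ·) = (a :: l).length := fun ha =>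
      List.countP_eq_length.mpr (by simpa using hall ha)
    cases r with
    | zero =>
      refine ⟨fun ha => (hcount ha).ge, fun hle => ?_⟩
      have := List.countP_eq_length.mp (le_antisymm (List.countP_le_length) hle) a (by simp)
      simpa using this
    | succ s =>
      by_cases ha : t < a
      · have := hall ha (a :: l)[s + 1] (List.getElem_mem _)
        simp only [this, true_iff, hcount ha]
        omega
      · simp only [List.getElem_cons_succ, List.countP_cons, ha, decide_false]
        simp only [List.length_cons] at hr ⊢
        rw [ih hl.2 (by omega)]
        simp

lemma msetMaj_iff_countP_le {A B : Multiset ℕ} (hcard : card A = card B) :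
    MsetMaj A B ↔ ∀ t, A.countP (t < ·) ≤ B.countP (t < ·) := by
  unfold MsetMaj
  set la := A.sort (· ≤ ·)
  set lb := B.sort (· ≤ ·)
  have hla : la.Pairwise (· ≤ ·) := pairwise_sort _ _
  have hlb : lb.Pairwise (· ≤ ·) := pairwise_sort _ _
  have hlen : lb.length = la.length := by simp [la, lb, hcard]
  have hcountA : ∀ t, A.countP (t < ·) = la.countP (t < ·) := fun t => by
    conv_lhs => rw [← sort_eq A (· ≤ ·)]
    rw [coe_countP]
  have hcountB : ∀ t, B.countP (t < ·) = lb.countP (t < ·) := fun t => by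
    conv_lhs => rw [← sort_eq B (· ≤ ·)]
    rw [coe_countP]
  simp only [hcountA, hcountB]
  constructor
  · intro hmaj t
    by_contra! hlt
    have := List.countP_le_length (p := (t < ·)) (l := la)
    set r := la.length - la.countP (t < ·)
    have hr : r < la.length := by omega
    have hta : t < la[r] := (hla.lt_getElem_iff t hr).mpr (by omega)
    have hab : la[r] ≤ lb[r]'(by omega) := by
      simpa [List.getD_eq_getElem, hr, hlen] using hmaj r
    have := (hlb.lt_getElem_iff t (r := r) (by omega)).mp (hta.trans_le hab)
    omega
  · intro hc r
    by_cases hr : r < la.length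
    · rw [List.getD_eq_getElem _ _ hr, List.getD_eq_getElem _ _ (by omega)]
      by_contra! hlt
      have hA := (hla.lt_getElem_iff _ hr).mp hlt
      have hB := (hlb.lt_getElem_iff (lb[r]'(by omega)) (r := r) (by omega)).not.mp (lt_irrefl _)
      have := hc (lb[r]'(by omega))
      omega
    · rw [List.getD_eq_default _ _ (by omega)]
      exact Nat.zero_le _

def lowerMset (x k : ℕ) (S : Multiset ℕ) : Multiset ℕ :=
  S - replicate k (x + 1) + replicate k x

section Lowering

variable {x k : ℕ} {S : Multiset ℕ}

lemma exists_eq_add_replicate (h : k ≤ S.count (x + 1)) :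
    ∃ T, S = T + replicate k (x + 1) :=
  ⟨S - replicate k (x + 1), (tsub_add_cancel_of_le (le_count_iff_replicate_le.mp h)).symm⟩

lemma lowerMset_add_replicate (T : Multiset ℕ) :
    lowerMset x k (T + replicate k (x + 1)) = T + replicate k x := by
  simp [lowerMset]

lemma card_lowerMset (h : k ≤ S.count (x + 1)) : card (lowerMset x k S) = card S := by
  obtain ⟨T, rfl⟩ := exists_eq_add_replicate h
  simp [lowerMset_add_replicate]

lemma sum_lowerMset (h : k ≤ S.count (x + 1)) : (lowerMset x k S).sum + k = S.sum := by
  obtain ⟨T, rfl⟩ := exists_eq_add_replicate h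
  simp only [lowerMset_add_replicate, sum_add, sum_replicate, smul_eq_mul]
  ring

lemma countP_lt_lowerMset (h : k ≤ S.count (x + 1)) (t : ℕ) :
    (lowerMset x k S).countP (t < ·) + (if t = x then k else 0) = S.countP (t < ·) := by
  obtain ⟨T, rfl⟩ := exists_eq_add_replicate h
  simp only [lowerMset_add_replicate, countP_add, countP_lt_replicate]
  split_ifs <;> omega

lemma count_self_lowerMset : (lowerMset x k S).count x = S.count x + k := by
  simp [lowerMset, count_replicate]

lemma one_le_of_mem_lowerMset (hx : 1 ≤ x) (hS : ∀ y ∈ S, 1 ≤ y) :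
    ∀ y ∈ lowerMset x k S, 1 ≤ y := by
  intro y hy
  rcases mem_add.mp hy with hy | hy
  · exact hS y (mem_of_le (Multiset.sub_le_self _ _) hy)
  · rw [eq_of_mem_replicate hy]; exact hx

lemma lowerMset_inj {S' : Multiset ℕ} (h : k ≤ S.count (x + 1)) (h' : k ≤ S'.count (x + 1))
    (heq : lowerMset x k S = lowerMset x k S') : S = S' := by
  obtain ⟨T, rfl⟩ := exists_eq_add_replicate h
  obtain ⟨T', rfl⟩ := exists_eq_add_replicate h'
  rw [lowerMset_add_replicate, lowerMset_add_replicate, add_left_inj] at heq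
  rw [heq]

end Lowering

lemma msetMaj_lowerMset {x k : ℕ} {S : Multiset ℕ} (h : k ≤ S.count (x + 1)) :
    MsetMaj (lowerMset x k S) S :=
  (msetMaj_iff_countP_le (card_lowerMset h)).mpr fun t => by
    have := countP_lt_lowerMset h t
    omega

lemma exists_msetMaj_lowerMset {A B : Multiset ℕ} (hne : A ≠ B)
    (hcard : card A = card B) (hA : ∀ y ∈ A, 1 ≤ y) (hAB : MsetMaj A B) :
    ∃ x, 1 ≤ x ∧ x + 1 ∈ B ∧ MsetMaj A (lowerMset x 1 B) := by
  rw [msetMaj_iff_countP_le hcard] at hAB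
  have hvanish : ∀ t, B.sup ≤ t → B.countP (t < ·) = 0 := fun t ht =>
    countP_eq_zero.mpr fun b hb => not_lt.mpr ((le_sup hb).trans ht)
  obtain ⟨t₀, ht₀⟩ : ∃ t, A.countP (t < ·) < B.countP (t < ·) := by
    by_contra! h
    exact hne (eq_of_countP_lt_eq hcard hA fun t => le_antisymm (hAB t) (h t))
  -- the largest threshold at which `A` has fewer entries above it than `B`; then `x + 1 ∈ B`
  set x := Nat.findGreatest (fun t => A.countP (t < ·) < B.countP (t < ·)) B.sup
  have hx : A.countP (x < ·) < B.countP (x < ·) :=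
    Nat.findGreatest_spec (P := fun t => A.countP (t < ·) < B.countP (t < ·))
      (by by_contra! h; rw [hvanish t₀ h.le] at ht₀; omega) ht₀
  have hx1 : A.countP (x + 1 < ·) = B.countP (x + 1 < ·) := by
    refine le_antisymm (hAB _) (not_lt.mp fun hlt => ?_)
    by_cases hle : x + 1 ≤ B.sup
    · exact Nat.findGreatest_is_greatest (Nat.lt_succ_self x) hle hlt
    · rw [hvanish _ (by omega)] at hlt; omega
  have hpos : 1 ≤ x := by
    by_contra! h0
    have hA0 : A.countP (0 < ·) = card A := countP_eq_card.mpr hA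
    have := countP_le_card (0 < ·) B
    simp only [Nat.lt_one_iff.mp h0] at hx
    omega
  have hmem : x + 1 ∈ B := by
    rw [← count_pos]
    have := countP_lt_eq_countP_succ_lt_add_count A x
    have := countP_lt_eq_countP_succ_lt_add_count B x
    omega
  have hcount : 1 ≤ B.count (x + 1) := one_le_count_iff_mem.mpr hmem
  refine ⟨x, hpos, hmem, (msetMaj_iff_countP_le (hcard.trans (card_lowerMset hcount).symm)).mpr
    fun t => ?_⟩
  have hlow := countP_lt_lowerMset hcount t
  by_cases htx : t = x
  · subst htx
    simp only [if_true] at hlow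
    omega
  · simp only [htx, if_false, add_zero] at hlow
    exact hlow ▸ hAB t

def LowerClosed (F : Finset (Multiset ℕ)) : Prop :=
  ∀ S ∈ F, ∀ x, 1 ≤ x → x + 1 ∈ S → lowerMset x 1 S ∈ F

lemma LowerClosed.closedMsetFam {m : ℕ} {F : Finset (Multiset ℕ)} (hcl : LowerClosed F)
    (hF : ∀ S ∈ F, card S = m) : ClosedMsetFam m F := by
  intro B hB A hA hApos hAB
  induction hs : B.sum using Nat.strong_induction_on generalizing B with
  | _ N ih =>
    by_cases hne : A = B
    · exact hne ▸ hB
    obtain ⟨x, hx, hxB, hAx⟩ := exists_msetMaj_lowerMset hne (hA.trans (hF B hB).symm) hApos hAB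
    have hcount : 1 ≤ B.count (x + 1) := one_le_count_iff_mem.mpr hxB
    have := sum_lowerMset hcount
    exact ih _ (by omega) _ (hcl B hB x hx hxB) hAx rfl

lemma ClosedMsetFam.msetMult_succ_le {m : ℕ} {F : Finset (Multiset ℕ)} (hcl : ClosedMsetFam m F)
    (hF : ∀ S ∈ F, card S = m ∧ ∀ y ∈ S, 1 ≤ y) {x : ℕ} (hx : 1 ≤ x) :
    msetMult F (x + 1) ≤ msetMult F x := by
  have hmem : ∀ S ∈ F, ∀ k ≤ S.count (x + 1), lowerMset x k S ∈ F := fun S hS k hk =>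
    hcl S hS _ ((card_lowerMset hk).trans (hF S hS).1)
      (one_le_of_mem_lowerMset hx (hF S hS).2) (msetMaj_lowerMset hk)
  have hcard : ∀ y, msetMult F y = (F.sigma fun S => Finset.range (S.count y)).card := by
    simp [msetMult, Finset.card_sigma]
  rw [hcard, hcard]
  -- the `i`-th copy of `x + 1` in `S` goes to the `i`-th copy of `x` in `lowerMset x (i + 1) S`
  refine Finset.card_le_card_of_injOn (fun p => ⟨lowerMset x (p.2 + 1) p.1, p.2⟩) ?_ ?_
  · rintro ⟨S, i⟩ hp
    simp only [Finset.coe_sigma, Set.mem_sigma_iff, Finset.mem_coe, Finset.mem_range] at hp ⊢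
    exact ⟨hmem S hp.1 (i + 1) hp.2, by rw [count_self_lowerMset]; omega⟩
  · rintro ⟨S, i⟩ hp ⟨S', i'⟩ hp' heq
    simp only [Finset.coe_sigma, Set.mem_sigma_iff, Finset.mem_coe, Finset.mem_range] at hp hp'
    simp only [Sigma.mk.injEq, heq_eq_eq] at heq
    obtain ⟨hS, rfl⟩ := heq
    rw [lowerMset_inj hp.2 hp'.2 hS]

lemma typeDefined_msetTupMult {m k : ℕ} {R : Fin k → Finset (Multiset ℕ)}
    (hcl : ∀ j, ClosedMsetFam m (R j))
    (hR : ∀ j, ∀ S ∈ R j, card S = m ∧ ∀ y ∈ S, 1 ≤ y) :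
    TypeDefined (msetTupMult R) := by
  have hsucc : ∀ x ≥ 1, msetTupMult R (x + 1) ≤ msetTupMult R x := fun x hx =>
    Finset.sum_le_sum fun j _ => (hcl j).msetMult_succ_le (hR j) hx
  intro i j hi hij
  exact antitoneOn_nat_Ici_of_succ_le hsucc (Set.mem_Ici.mpr hi) (Set.mem_Ici.mpr (hi.trans hij))
    hij

lemma partSum_eq_sum_Ioc {f : ℕ → ℕ} {Y : ℕ} (hf : Function.support f ⊆ Set.Ioc 0 Y) (j : ℕ) :
    partSum f j = ∑ x ∈ Finset.Ioc 0 Y, min (f x) j := by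
  refine finsum_eq_finsetSum_of_support_subset _ fun x hx => ?_
  rw [Finset.coe_Ioc]
  exact hf fun h0 => hx (by simp [h0])

lemma conjDom_of_sum_Ioc_le {f g : ℕ → ℕ} {Y : ℕ} (hf : Function.support f ⊆ Set.Ioc 0 Y)
    (hg : Function.support g ⊆ Set.Ioc 0 Y) (hanti : TypeDefined f)
    (htail : ∀ t, ∑ x ∈ Finset.Ioc t Y, g x ≤ ∑ x ∈ Finset.Ioc t Y, f x) : ConjDom g f := by
  intro j
  rw [partSum_eq_sum_Ioc hg, partSum_eq_sum_Ioc hf]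
  -- for `j ≥ 1`, `y₀` is the part `λ_j` of the partition `λ` with conjugate `f`
  set P : ℕ → Prop := fun y => j ≤ f y
  set y₀ := Nat.findGreatest P Y
  have hy₀ : y₀ ≤ Y := Nat.findGreatest_le Y
  have hlarge : ∀ x ∈ Finset.Ioc 0 y₀, min (f x) j = j := fun x hx => by
    rw [Finset.mem_Ioc] at hx
    have hP : P y₀ := Nat.findGreatest_of_ne_zero rfl (by omega)
    exact min_eq_right (hP.trans (hanti x y₀ hx.1 hx.2))
  have hsmall : ∀ x ∈ Finset.Ioc y₀ Y, min (f x) j = f x := fun x hx => by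
    rw [Finset.mem_Ioc] at hx
    exact min_eq_left (not_le.mp (Nat.findGreatest_is_greatest (P := P) hx.1 hx.2)).le
  rw [← Finset.sum_Ioc_consecutive _ (Nat.zero_le y₀) hy₀,
    ← Finset.sum_Ioc_consecutive _ (Nat.zero_le y₀) hy₀,
    Finset.sum_congr rfl hlarge, Finset.sum_congr rfl hsmall]
  exact add_le_add (Finset.sum_le_sum fun x _ => min_le_right _ _)
    ((Finset.sum_le_sum fun x _ => min_le_left _ _).trans (htail y₀))

section Tuples

variable {k : ℕ}

def tupleSum (R : Fin k → Finset (Multiset ℕ)) : ℕ := ∑ j, ∑ S ∈ R j, S.sum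

def tupleTail (R : Fin k → Finset (Multiset ℕ)) (t : ℕ) : ℕ :=
  ∑ j, ∑ S ∈ R j, S.countP (t < ·)

lemma sum_sum_update_insert_erase (R : Fin k → Finset (Multiset ℕ)) {l : Fin k}
    {S S' : Multiset ℕ} (hS : S ∈ R l) (hS' : S' ∉ R l) (φ : Multiset ℕ → ℕ) :
    (∑ j, ∑ T ∈ Function.update R l (insert S' ((R l).erase S)) j, φ T) + φ S
      = (∑ j, ∑ T ∈ R j, φ T) + φ S' := by
  have hupd : ∀ j, ∑ T ∈ Function.update R l (insert S' ((R l).erase S)) j, φ T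
      = Function.update (fun j => ∑ T ∈ R j, φ T) l (∑ T ∈ insert S' ((R l).erase S), φ T) j :=
    fun j => Function.apply_update (fun _ s => ∑ T ∈ s, φ T) R l _ j
  rw [Finset.sum_congr rfl fun j _ => hupd j, Finset.sum_update_of_mem (Finset.mem_univ l),
    ← Finset.add_sum_erase _ _ (Finset.mem_univ l), Finset.sdiff_singleton_eq_erase l Finset.univ,
    Finset.sum_insert fun h => hS' (Finset.mem_of_mem_erase h),
    ← Finset.add_sum_erase _ _ hS]
  ring

variable {R : Fin k → Finset (Multiset ℕ)}

lemma exists_lowerMset_step {m : ℕ} {n : Fin k → ℕ}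
    (hR : ∀ j, IsMsetFamily m (n j) (R j)) {l : Fin k} {S : Multiset ℕ} (hS : S ∈ R l)
    {x : ℕ} (hx : 1 ≤ x) (hxS : x + 1 ∈ S) (hlow : lowerMset x 1 S ∉ R l) :
    ∃ R', (∀ j, IsMsetFamily m (n j) (R' j)) ∧ tupleSum R' < tupleSum R ∧
      ∀ t, tupleTail R' t + (if t = x then 1 else 0) = tupleTail R t := by
  have hcount : 1 ≤ S.count (x + 1) := one_le_count_iff_mem.mpr hxS
  refine ⟨Function.update R l (insert (lowerMset x 1 S) ((R l).erase S)), fun j => ?_, ?_,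
    fun t => ?_⟩
  · rcases eq_or_ne j l with rfl | hj
    · rw [Function.update_self]
      refine ⟨?_, fun T hT => ?_⟩
      · rw [Finset.card_insert_of_notMem fun h => hlow (Finset.mem_of_mem_erase h),
          Finset.card_erase_add_one hS, (hR j).1]
      · rcases Finset.mem_insert.mp hT with rfl | hT
        · exact ⟨(card_lowerMset hcount).trans ((hR j).2 S hS).1,
            one_le_of_mem_lowerMset hx ((hR j).2 S hS).2⟩
        · exact (hR j).2 T (Finset.mem_of_mem_erase hT)
    · rw [Function.update_of_ne hj]
      exact hR j
  · have := sum_sum_update_insert_erase R hS hlow sum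
    have := sum_lowerMset hcount
    unfold tupleSum
    omega
  · have := sum_sum_update_insert_erase R hS hlow (·.countP (t < ·))
    have := countP_lt_lowerMset hcount t
    unfold tupleTail
    omega

lemma exists_lowerClosed_tupleTail_le {m : ℕ} {n : Fin k → ℕ}
    (hR : ∀ j, IsMsetFamily m (n j) (R j)) :
    ∃ R', (∀ j, IsMsetFamily m (n j) (R' j)) ∧ (∀ j, LowerClosed (R' j)) ∧
      ∀ t, tupleTail R' t ≤ tupleTail R t := by
  obtain ⟨R', ⟨hR', htail⟩, hmin⟩ := (measure tupleSum).wf.has_min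
    {R' | (∀ j, IsMsetFamily m (n j) (R' j)) ∧ ∀ t, tupleTail R' t ≤ tupleTail R t}
    ⟨R, hR, fun _ => le_rfl⟩
  refine ⟨R', hR', fun l S hS x hx hxS => ?_, htail⟩
  by_contra hlow
  obtain ⟨R'', hR'', hsum, htail''⟩ := exists_lowerMset_step hR' hS hx hxS hlow
  exact hmin R'' ⟨hR'', fun t => (Nat.le.intro (htail'' t)).trans (htail t)⟩ hsum

lemma le_tupleSum {j : Fin k} {S : Multiset ℕ} (hS : S ∈ R j) {x : ℕ} (hx : x ∈ S) :
    x ≤ tupleSum R :=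
  calc x ≤ S.sum := le_sum_of_mem hx
    _ ≤ ∑ T ∈ R j, T.sum := Finset.single_le_sum (fun _ _ => Nat.zero_le _) hS
    _ ≤ tupleSum R := Finset.single_le_sum (f := fun i => ∑ T ∈ R i, T.sum)
        (fun _ _ => Nat.zero_le _) (Finset.mem_univ j)

lemma tupleTail_eq_sum_Ioc {Y : ℕ} (hY : ∀ j, ∀ S ∈ R j, ∀ x ∈ S, x ≤ Y) (t : ℕ) :
    tupleTail R t = ∑ x ∈ Finset.Ioc t Y, msetTupMult R x := by
  simp only [tupleTail, msetTupMult, msetMult]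
  rw [Finset.sum_comm]
  refine Finset.sum_congr rfl fun j _ => ?_
  rw [Finset.sum_comm]
  exact Finset.sum_congr rfl fun S hS => countP_lt_eq_sum_Ioc_count (hY j S hS) t

lemma support_msetTupMult_subset {Y : ℕ} (hpos : ∀ j, ∀ S ∈ R j, ∀ x ∈ S, 1 ≤ x)
    (hY : ∀ j, ∀ S ∈ R j, ∀ x ∈ S, x ≤ Y) : Function.support (msetTupMult R) ⊆ Set.Ioc 0 Y := by
  intro x hx
  obtain ⟨j, -, hj⟩ := Finset.exists_ne_zero_of_sum_ne_zero hx
  obtain ⟨S, hS, hSx⟩ := Finset.exists_ne_zero_of_sum_ne_zero hj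
  have hxS := count_ne_zero.mp hSx
  exact ⟨hpos j S hS x hxS, hY j S hS x hxS⟩

lemma conjStrictDom_of_tupleTail_le {Q : Fin k → Finset (Multiset ℕ)}
    (hRpos : ∀ j, ∀ S ∈ R j, ∀ x ∈ S, 1 ≤ x) (hQpos : ∀ j, ∀ S ∈ Q j, ∀ x ∈ S, 1 ≤ x)
    (hQ : TypeDefined (msetTupMult Q)) (hle : ∀ t, tupleTail R t ≤ tupleTail Q t) {t₀ : ℕ}
    (hlt : tupleTail R t₀ < tupleTail Q t₀) : ConjStrictDom (msetTupMult R) (msetTupMult Q) := by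
  set Y := max (tupleSum R) (tupleSum Q)
  have hRY : ∀ j, ∀ S ∈ R j, ∀ x ∈ S, x ≤ Y := fun j S hS x hx =>
    (le_tupleSum hS hx).trans (le_max_left _ _)
  have hQY : ∀ j, ∀ S ∈ Q j, ∀ x ∈ S, x ≤ Y := fun j S hS x hx =>
    (le_tupleSum hS hx).trans (le_max_right _ _)
  simp only [tupleTail_eq_sum_Ioc hRY, tupleTail_eq_sum_Ioc hQY] at hle hlt
  refine ⟨conjDom_of_sum_Ioc_le (support_msetTupMult_subset hQpos hQY)
    (support_msetTupMult_subset hRpos hRY) hQ hle, ?_⟩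
  by_contra! heq
  refine hlt.ne (Finset.sum_congr rfl fun x hx => heq x ?_)
  have := (Finset.mem_Ioc.mp hx).1
  omega

end Tuples

/-- Every minimal multiset family tuple is closed. -/
theorem stmt_3 (m k : ℕ) (n : Fin k → ℕ) (Q : Fin k → Finset (Multiset ℕ))
    (hQ : ∀ j, IsMsetFamily m (n j) (Q j))
    (htype : TypeDefined (msetTupMult Q))
    (hmin : ¬ ∃ R : Fin k → Finset (Multiset ℕ),
      (∀ j, IsMsetFamily m (n j) (R j)) ∧ TypeDefined (msetTupMult R) ∧
        ConjStrictDom (msetTupMult R) (msetTupMult Q)) :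
    ∀ j, ClosedMsetFam m (Q j) := by
  by_contra! ⟨j₀, hj₀⟩
  obtain ⟨S, hS, x, hx, hxS, hlow⟩ :
      ∃ S ∈ Q j₀, ∃ x, 1 ≤ x ∧ x + 1 ∈ S ∧ lowerMset x 1 S ∉ Q j₀ := by
    by_contra! hcl
    exact hj₀ (LowerClosed.closedMsetFam hcl fun S hS => ((hQ j₀).2 S hS).1)
  obtain ⟨Q', hQ', -, hQ'tail⟩ := exists_lowerMset_step hQ hS hx hxS hlow
  obtain ⟨R, hR, hRcl, hRtail⟩ := exists_lowerClosed_tupleTail_le hQ'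
  have hRQ : ∀ t, tupleTail R t + (if t = x then 1 else 0) ≤ tupleTail Q t := fun t =>
    hQ'tail t ▸ Nat.add_le_add_right (hRtail t) _
  refine hmin ⟨R, hR, typeDefined_msetTupMult (fun j => (hRcl j).closedMsetFam
    fun S hS => ((hR j).2 S hS).1) fun j => (hR j).2, ?_⟩
  refine conjStrictDom_of_tupleTail_le (fun j S hS => ((hR j).2 S hS).2)
    (fun j S hS => ((hQ j).2 S hS).2) htype (fun t => (Nat.le_add_right _ _).trans (hRQ t))
    (t₀ := x) ?_
  simpa using hRQ x
end

section
/- If (P_1,…,P_k) is a closed set family tuple then its type is defined; that is, the function i ↦ (total number of sets among P_1,…,P_k containing i) is weakly decreasing in i. -/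
/-!
Let `1 ≤ i ≤ j`. Swapping `i` and `j` in a set that avoids `i` can only lower its elements, so
the new set is majorized by the old one and, by closedness, stays in the family. The swap is
injective and sends sets containing `j` but not `i` to sets containing `i` but not `j`, so in each
family `i` is contained in at least as many sets as `j`; summing over the tuple gives the claim.
-/

open Finset

section OrderEmbOfFin

variable {α : Type*} [LinearOrder α] {s : Finset α} {k : ℕ}

lemma filter_eq_map_orderEmbOfFin (h : #s = k) (p : α → Prop) [DecidablePred p] :
    s.filter p = (univ.filter (p ∘ s.orderEmbOfFin h)).map (s.orderEmbOfFin h).toEmbedding := by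
  conv_lhs => rw [← map_orderEmbOfFin_univ s h]
  exact filter_map

lemma card_filter_orderEmbOfFin_le (h : #s = k) (r : Fin k) :
    #{x ∈ s | s.orderEmbOfFin h r ≤ x} = k - r := by
  rw [filter_eq_map_orderEmbOfFin h, card_map]
  simp only [Function.comp_def, OrderEmbedding.le_iff_le, filter_le_eq_Ici, Fin.card_Ici]

lemma card_filter_orderEmbOfFin_lt (h : #s = k) (r : Fin k) :
    #{x ∈ s | s.orderEmbOfFin h r < x} = k - 1 - r := by
  rw [filter_eq_map_orderEmbOfFin h, card_map]
  simp only [Function.comp_def, OrderEmbedding.lt_iff_lt, filter_lt_eq_Ioi, Fin.card_Ioi]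

end OrderEmbOfFin

lemma getD_sort_eq_orderEmbOfFin {A : Finset ℕ} {k : ℕ} (hA : #A = k) {r : ℕ} (hr : r < k) :
    (A.sort (· ≤ ·)).getD r 0 = A.orderEmbOfFin hA ⟨r, hr⟩ := by
  rw [List.getD_eq_getElem _ _ (by simpa [hA] using hr)]
  rfl

lemma setMaj_of_card_filter_le {A B : Finset ℕ} (hAB : #A = #B)
    (h : ∀ t, #{x ∈ A | t ≤ x} ≤ #{x ∈ B | t ≤ x}) : SetMaj A B := by
  intro r
  by_cases hr : r < #A
  · rw [getD_sort_eq_orderEmbOfFin rfl hr, getD_sort_eq_orderEmbOfFin hAB.symm hr]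
    by_contra! hlt
    -- `b_r < a_r`: at least `#A - r` elements of `A` but at most `#A - 1 - r` of `B` are `≥ a_r`.
    have hA := card_filter_orderEmbOfFin_le (s := A) rfl ⟨r, hr⟩
    have hB := card_filter_orderEmbOfFin_lt hAB.symm ⟨r, hr⟩
    have := (h _).trans (card_le_card (monotone_filter_right B fun x _ hx => hlt.trans_le hx))
    omega
  · rw [List.getD_eq_default _ _ (by simpa using hr)]
    exact Nat.zero_le _

lemma setMaj_map_of_forall_le {S : Finset ℕ} (φ : ℕ ↪ ℕ) (h : ∀ x ∈ S, φ x ≤ x) :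
    SetMaj (S.map φ) S :=
  setMaj_of_card_filter_le (card_map φ) fun t => by
    rw [filter_map, card_map]
    exact card_le_card fun x hx => by
      simp only [mem_filter, Function.comp_apply] at hx ⊢
      exact ⟨hx.1, hx.2.trans (h x hx.1)⟩

lemma Equiv.swap_apply_le_self {α : Type*} [Preorder α] [DecidableEq α] {i j x : α}
    (hij : i ≤ j) (hxi : x ≠ i) : Equiv.swap i j x ≤ x := by
  rw [Equiv.swap_apply_def, if_neg hxi]
  split_ifs with hxj
  · exact hxj ▸ hij
  · exact le_rfl

lemma ClosedFam.map_swap_mem {m : ℕ} {P : Finset (Finset ℕ)} (hclosed : ClosedFam m P)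
    (hP : ∀ S ∈ P, #S = m ∧ ∀ x ∈ S, 1 ≤ x) {i j : ℕ} (hi : 1 ≤ i) (hij : i ≤ j)
    {S : Finset ℕ} (hS : S ∈ P) (hiS : i ∉ S) : S.map (Equiv.swap i j).toEmbedding ∈ P := by
  refine hclosed S hS _ ((card_map _).trans (hP S hS).1) ?_ (setMaj_map_of_forall_le _
    fun x hx => Equiv.swap_apply_le_self hij (ne_of_mem_of_not_mem hx hiS))
  simp only [mem_map_equiv, Equiv.symm_swap]
  intro y hy
  rw [Equiv.swap_apply_def] at hy
  split_ifs at hy with hyi hyj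
  · omega
  · omega
  · exact (hP S hS).2 y hy

lemma famMult_le_of_closedFam {m : ℕ} {P : Finset (Finset ℕ)} (hclosed : ClosedFam m P)
    (hP : ∀ S ∈ P, #S = m ∧ ∀ x ∈ S, 1 ≤ x) {i j : ℕ} (hi : 1 ≤ i) (hij : i ≤ j) :
    famMult P j ≤ famMult P i := by
  have hswap : #{S ∈ P | j ∈ S ∧ i ∉ S} ≤ #{S ∈ P | i ∈ S ∧ j ∉ S} := by
    refine card_le_card_of_injOn (fun S => S.map (Equiv.swap i j).toEmbedding) ?_
      (map_injective _).injOn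
    intro S hS
    simp only [coe_filter, Set.mem_ofPred_eq] at hS ⊢
    simp only [mem_map_equiv, Equiv.symm_swap, Equiv.swap_apply_left, Equiv.swap_apply_right]
    exact ⟨hclosed.map_swap_mem hP hi hij hS.1 hS.2.2, hS.2.1, hS.2.2⟩
  have hsplit_j := card_filter_add_card_filter_not (s := P.filter (j ∈ ·)) (i ∈ ·)
  have hsplit_i := card_filter_add_card_filter_not (s := P.filter (i ∈ ·)) (j ∈ ·)
  simp only [filter_filter] at hsplit_j hsplit_i
  rw [famMult, famMult, ← hsplit_j, ← hsplit_i, filter_congr fun S _ => and_comm (a := j ∈ S)]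
  omega

/-- The type of a closed set family tuple is always defined: the total
multiplicity function is weakly decreasing on the positive integers. -/
theorem stmt_4 (m k : ℕ) (n : Fin k → ℕ) (P : Fin k → Finset (Finset ℕ))
    (hP : ∀ j, IsSetFamily m (n j) (P j))
    (hclosed : ∀ j, ClosedFam m (P j)) :
    TypeDefined (tupMult P) :=
  fun _ _ hi hij => sum_le_sum fun l _ => famMult_le_of_closedFam (hclosed l) (hP l).2 hi hij
end

section
/- If (Q_1,…,Q_k) is a closed multiset family tuple then its type is defined; that is, the function i ↦ (total number of occurrences of i, counted with multiplicity, among all the multisets of Q_1,…,Q_k) is weakly decreasing in i. -/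
/-! Swapping all occurrences of `i` and `j` in a member with fewer `i`s than `j`s lowers it in the
majorization order, so a closed family is stable under this swap for such members. The map
sending `S` to its swap when the swap lies in `Q`, and to itself otherwise, is thus an involution
of `Q` that never increases the number of `j`s beyond the number of `i`s: a member whose swap
falls outside `Q` already has more `i`s than `j`s. Summing over `Q` gives
`msetMult Q j ≤ msetMult Q i`. -/

open Multiset Equiv

theorem List.SortedLE.getElem_lt_iff_lt_countP {α : Type*} [LinearOrder α] {l : List α}
    (hl : l.SortedLE) {r : ℕ} (hr : r < l.length) (t : α) :
    l[r] < t ↔ r < l.countP (· < t) := by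
  constructor
  · intro hrt
    have hprefix : (l.take (r + 1)).countP (· < t) = r + 1 := by
      rw [List.countP_eq_length.mpr, List.length_take_of_le hr]
      intro a ha
      obtain ⟨q, hq, rfl⟩ := List.mem_iff_getElem.mp ha
      rw [List.getElem_take]
      have hqr : q ≤ r := by rw [List.length_take_of_le hr] at hq; omega
      simpa using (hl.getElem_le_getElem_of_le hqr).trans_lt hrt
    have hsub := (l.take_sublist (r + 1)).countP_le (p := (· < t))
    omega
  · intro hcount
    by_contra! htr
    have hsuffix : (l.drop r).countP (· < t) = 0 := by
      rw [List.countP_eq_zero]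
      intro a ha
      obtain ⟨q, hq, rfl⟩ := List.mem_iff_getElem.mp ha
      rw [List.getElem_drop]
      simpa using htr.trans (hl.getElem_le_getElem_of_le (Nat.le_add_right r q))
    have hprefix : (l.take r).countP (· < t) ≤ r :=
      List.countP_le_length.trans (List.length_take_le _ _)
    rw [← l.take_append_drop r, List.countP_append] at hcount
    omega

theorem Multiset.countP_replicate {α : Type*} (p : α → Prop) [DecidablePred p] (d : ℕ) (x : α) :
    (replicate d x).countP p = if p x then d else 0 := by
  simp [← coe_replicate, List.countP_replicate]

theorem Multiset.count_map_swap {α : Type*} [DecidableEq α] (S : Multiset α) (i j x : α) :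
    (S.map (swap i j)).count x = S.count (swap i j x) := by
  rw [← count_map_eq_count' _ S (swap i j).injective (swap i j x), swap_apply_self]

theorem Multiset.map_swap_eq_sub_replicate_add_replicate {α : Type*} [DecidableEq α]
    {S : Multiset α} {i j : α} (h : S.count i ≤ S.count j) :
    S.map (swap i j) =
      S - replicate (S.count j - S.count i) j + replicate (S.count j - S.count i) i := by
  rcases eq_or_ne i j with rfl | hij
  · simp
  ext x
  rw [count_map_swap, count_add, count_sub, count_replicate, count_replicate]
  rcases eq_or_ne x i with rfl | hxi
  · simp only [swap_apply_left, hij.symm, ↓reduceIte, tsub_zero]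
    omega
  rcases eq_or_ne x j with rfl | hxj
  · simp only [swap_apply_right, ↓reduceIte, hij, add_zero]
    omega
  · simp [swap_apply_of_ne_of_ne, hxi, hxj, hxi.symm, hxj.symm]

theorem msetMaj_of_countP_le {A B : Multiset ℕ} (hcard : card A = card B)
    (h : ∀ t, B.countP (· < t) ≤ A.countP (· < t)) : MsetMaj A B := by
  intro r
  have hsorted (S : Multiset ℕ) : (S.sort (· ≤ ·)).SortedLE :=
    List.sortedLE_iff_pairwise.mpr (S.pairwise_sort _)
  have hcountP (S : Multiset ℕ) (t : ℕ) :
      S.countP (· < t) = (S.sort (· ≤ ·)).countP (· < t) := by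
    conv_lhs => rw [← S.sort_eq (· ≤ ·)]
    rw [coe_countP]
  have hlen : (A.sort (· ≤ ·)).length = (B.sort (· ≤ ·)).length := by simp [hcard]
  by_cases hr : r < (A.sort (· ≤ ·)).length
  · rw [List.getD_eq_getElem _ _ hr, List.getD_eq_getElem _ _ (hlen ▸ hr)]
    by_contra! hlt
    have hB := ((hsorted B).getElem_lt_iff_lt_countP (hlen ▸ hr) _).mp hlt
    have hA := (hsorted A).getElem_lt_iff_lt_countP hr (A.sort (· ≤ ·))[r]
    have hAB := h (A.sort (· ≤ ·))[r]
    rw [hcountP, hcountP] at hAB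
    exact lt_irrefl _ (hA.mpr (by omega))
  · rw [List.getD_eq_default _ _ (not_lt.mp hr)]
    exact Nat.zero_le _

theorem msetMaj_sub_replicate_add_replicate {S : Multiset ℕ} {i j d : ℕ} (hij : i ≤ j)
    (hd : replicate d j ≤ S) : MsetMaj (S - replicate d j + replicate d i) S := by
  refine msetMaj_of_countP_le ?_ fun t => ?_
  · have := card_le_card hd
    simp only [card_add, card_sub hd, card_replicate] at this ⊢
    omega
  · conv_lhs => rw [← tsub_add_cancel_of_le hd]
    rw [countP_add, countP_add, countP_replicate, countP_replicate]
    split_ifs <;> omega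

theorem msetMaj_map_swap {S : Multiset ℕ} {i j : ℕ} (hij : i ≤ j) (h : S.count i ≤ S.count j) :
    MsetMaj (S.map (swap i j)) S := by
  rw [map_swap_eq_sub_replicate_add_replicate h]
  exact msetMaj_sub_replicate_add_replicate hij (le_count_iff_replicate_le.mp (Nat.sub_le _ _))

theorem ClosedMsetFam.map_swap_mem {m i j : ℕ} {Q : Finset (Multiset ℕ)}
    (hQ : ∀ S ∈ Q, card S = m ∧ ∀ x ∈ S, 1 ≤ x) (hcl : ClosedMsetFam m Q) (hi : 1 ≤ i)
    (hij : i ≤ j) {S : Multiset ℕ} (hS : S ∈ Q) (h : S.count i ≤ S.count j) :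
    S.map (swap i j) ∈ Q := by
  obtain ⟨hcard, hpos⟩ := hQ S hS
  refine hcl S hS _ (by rw [card_map, hcard]) ?_ (msetMaj_map_swap hij h)
  intro y hy
  obtain ⟨x, hx, rfl⟩ := mem_map.mp hy
  have := hpos x hx
  rw [swap_apply_def]
  split_ifs <;> omega

theorem ClosedMsetFam.msetMult_le_of_le {m i j : ℕ} {Q : Finset (Multiset ℕ)}
    (hQ : ∀ S ∈ Q, card S = m ∧ ∀ x ∈ S, 1 ≤ x) (hcl : ClosedMsetFam m Q) (hi : 1 ≤ i)
    (hij : i ≤ j) : msetMult Q j ≤ msetMult Q i := by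
  let σ : Multiset ℕ → Multiset ℕ := fun S =>
    if S.map (swap i j) ∈ Q then S.map (swap i j) else S
  have hσ_mem : ∀ S ∈ Q, σ S ∈ Q := by
    intro S hS
    dsimp only [σ]
    split_ifs with h
    exacts [h, hS]
  have hσσ : ∀ S ∈ Q, σ (σ S) = S := by
    intro S hS
    by_cases h : S.map (swap i j) ∈ Q
    · simp [σ, h, map_map, hS]
    · simp [σ, h]
  have hσ_count : ∀ S ∈ Q, (σ S).count j ≤ S.count i := by
    intro S hS
    by_cases h : S.map (swap i j) ∈ Q
    · simp [σ, h, count_map_swap]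
    · have := mt (hcl.map_swap_mem hQ hi hij hS) h
      simp only [σ, h, if_false]
      omega
  calc msetMult Q j = ∑ S ∈ Q, (σ S).count j :=
        Finset.sum_nbij' σ σ hσ_mem hσ_mem hσσ hσσ fun S hS => by rw [hσσ S hS]
    _ ≤ msetMult Q i := Finset.sum_le_sum hσ_count

/-- The type of a closed multiset family tuple is always defined: the total
multiplicity function is weakly decreasing on the positive integers. -/
theorem stmt_5 (m k : ℕ) (n : Fin k → ℕ) (Q : Fin k → Finset (Multiset ℕ))
    (hQ : ∀ j, IsMsetFamily m (n j) (Q j))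
    (hclosed : ∀ j, ClosedMsetFam m (Q j)) :
    TypeDefined (msetTupMult Q) := fun _ _ hi hij =>
  Finset.sum_le_sum fun t _ => (hclosed t).msetMult_le_of_le (hQ t).2 hi hij
end

section
/- Let P be a set family of shape (m^n), let B ∈ P and i ≥ 1 be such that i+1 ∈ B and i ∉ B, and suppose that the set A = (B \ {i+1}) ∪ {i} is not in P. Then P' = (P \ {B}) ∪ {A} is a set family of shape (m^n), and if both P and P' have defined types λ and μ respectively, then μ ⊲ λ. -/
open Finset Function

lemma Finset.sum_le_sum_of_pair {α M : Type*} [DecidableEq α] [AddCommMonoid M] [PartialOrder M]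
    [IsOrderedAddMonoid M] {T : Finset α} {φ ψ : α → M} {a b : α} (ha : a ∈ T) (hb : b ∈ T)
    (hab : a ≠ b) (hpair : φ a + φ b ≤ ψ a + ψ b) (hrest : ∀ x ∈ T, x ≠ a → x ≠ b → φ x = ψ x) :
    ∑ x ∈ T, φ x ≤ ∑ x ∈ T, ψ x := by
  have hsub : {a, b} ⊆ T := insert_subset ha (singleton_subset_iff.mpr hb)
  rw [← sum_sdiff hsub, ← sum_sdiff (f := ψ) hsub, sum_pair hab, sum_pair hab]
  refine add_le_add (le_of_eq (sum_congr rfl fun x hx => ?_)) hpair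
  simp only [mem_sdiff, mem_insert, mem_singleton, not_or] at hx
  exact hrest x hx.1 hx.2.1 hx.2.2

lemma finsum_le_finsum_of_pair {α M : Type*} [AddCommMonoid M] [PartialOrder M]
    [IsOrderedAddMonoid M] {φ ψ : α → M} (hφ : (support φ).Finite) (hψ : (support ψ).Finite)
    {a b : α} (hab : a ≠ b) (hpair : φ a + φ b ≤ ψ a + ψ b)
    (hrest : ∀ x, x ≠ a → x ≠ b → φ x = ψ x) :
    ∑ᶠ x, φ x ≤ ∑ᶠ x, ψ x := by
  classical
  set T := insert a (insert b (hφ.toFinset ∪ hψ.toFinset))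
  have hφT : support φ ⊆ T := fun x hx => by simp [T, hx]
  have hψT : support ψ ⊆ T := fun x hx => by simp [T, hx]
  rw [finsum_eq_sum_of_support_subset φ hφT, finsum_eq_sum_of_support_subset ψ hψT]
  exact sum_le_sum_of_pair (by simp [T]) (by simp [T]) hab hpair fun x _ => hrest x

lemma conjDom_of_move_down {f g : ℕ → ℕ} (hf : (support f).Finite) (hg : (support g).Finite)
    {i : ℕ} (hfi : f (i + 1) ≤ f i) (hgi : g i = f i + 1) (hgi1 : g (i + 1) + 1 = f (i + 1))
    (hrest : ∀ x, x ≠ i → x ≠ i + 1 → g x = f x) :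
    ConjDom g f := by
  intro j
  have hmin {h : ℕ → ℕ} (hh : (support h).Finite) : (support fun x => min (h x) j).Finite :=
    hh.subset fun x hx => by simp only [mem_support] at hx ⊢; omega
  refine finsum_le_finsum_of_pair (hmin hg) (hmin hf) (Nat.ne_add_one i) ?_ fun x h1 h2 => ?_
  · omega
  · rw [hrest x h1 h2]

lemma famMult_insert_of_notMem {P : Finset (Finset ℕ)} {A : Finset ℕ} (hA : A ∉ P) (x : ℕ) :
    famMult (insert A P) x = famMult P x + if x ∈ A then 1 else 0 := by
  unfold famMult
  rw [filter_insert]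
  split_ifs
  · exact card_insert_of_notMem fun h => hA (mem_filter.mp h).1
  · rfl

lemma famMult_replace {P : Finset (Finset ℕ)} {A B : Finset ℕ} (hB : B ∈ P) (hA : A ∉ P.erase B)
    (x : ℕ) :
    famMult (insert A (P.erase B)) x + (if x ∈ B then 1 else 0) =
      famMult P x + if x ∈ A then 1 else 0 := by
  conv_rhs => rw [← insert_erase hB, famMult_insert_of_notMem (notMem_erase B P)]
  rw [famMult_insert_of_notMem hA]
  ring

lemma famMult_support_finite (P : Finset (Finset ℕ)) : (support (famMult P)).Finite := by
  refine (P.biUnion id).finite_toSet.subset fun x hx => ?_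
  obtain ⟨S, hS⟩ := card_ne_zero.mp hx
  exact mem_biUnion.mpr ⟨S, (mem_filter.mp hS).1, (mem_filter.mp hS).2⟩

lemma IsSetFamily.replace {m n : ℕ} {P : Finset (Finset ℕ)} (hP : IsSetFamily m n P)
    {A B : Finset ℕ} (hB : B ∈ P) (hA : A ∉ P) (hAcard : A.card = m) (hApos : ∀ x ∈ A, 1 ≤ x) :
    IsSetFamily m n (insert A (P.erase B)) := by
  refine ⟨?_, fun S hS => ?_⟩
  · rw [card_insert_of_notMem fun h => hA (mem_of_mem_erase h), card_erase_of_mem hB, ← hP.1]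
    exact Nat.sub_add_cancel (card_pos.mpr ⟨B, hB⟩)
  · rcases mem_insert.mp hS with rfl | hS
    · exact ⟨hAcard, hApos⟩
    · exact hP.2 S (mem_of_mem_erase hS)

lemma card_insert_erase_of_mem {B : Finset ℕ} {a b : ℕ} (hb : b ∈ B) (ha : a ∉ B) :
    (insert a (B.erase b)).card = B.card := by
  rw [card_insert_of_notMem fun h => ha (mem_of_mem_erase h), card_erase_add_one hb]

/-- Replacing `B ∈ P` (with `i+1 ∈ B`, `i ∉ B`, `i ≥ 1`) by
`A = (B \ {i+1}) ∪ {i} ∉ P` yields a set family of the same shape whose type, when both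
types are defined, is strictly dominated by that of `P`. -/
theorem stmt_6 (m n : ℕ) (P : Finset (Finset ℕ)) (hP : IsSetFamily m n P)
    (B : Finset ℕ) (hB : B ∈ P) (i : ℕ) (hi : 1 ≤ i)
    (hmem : i + 1 ∈ B) (hnotmem : i ∉ B)
    (hA : insert i (B.erase (i + 1)) ∉ P) :
    IsSetFamily m n (insert (insert i (B.erase (i + 1))) (P.erase B)) ∧
    (TypeDefined (famMult P) →
      TypeDefined (famMult (insert (insert i (B.erase (i + 1))) (P.erase B))) →
      ConjStrictDom (famMult (insert (insert i (B.erase (i + 1))) (P.erase B))) (famMult P)) := by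
  set A := insert i (B.erase (i + 1))
  have hApos : ∀ x ∈ A, 1 ≤ x := by
    simp only [A, mem_insert, mem_erase]
    rintro x (rfl | ⟨-, hx⟩)
    exacts [hi, (hP.2 B hB).2 x hx]
  have hmult := famMult_replace hB fun h => hA (mem_of_mem_erase h)
  have hgi : famMult (insert A (P.erase B)) i = famMult P i + 1 := by
    simpa [A, hnotmem] using hmult i
  have hgi1 : famMult (insert A (P.erase B)) (i + 1) + 1 = famMult P (i + 1) := by
    simpa [A, hmem] using hmult (i + 1)
  refine ⟨hP.replace hB hA ((card_insert_erase_of_mem hmem hnotmem).trans (hP.2 B hB).1) hApos,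
    fun hf _ => ⟨conjDom_of_move_down (famMult_support_finite _) (famMult_support_finite _)
      (hf i (i + 1) hi i.le_succ) hgi hgi1 fun x h1 h2 => ?_, i, hi, by omega⟩⟩
  simpa [A, h1, h2] using hmult x
end

section
/- Let m ≥ 1, let 1 ≤ r ≤ m, and let p_1 > p_2 > … > p_r > 0 be integers with p_j ≥ m+1−j for each j. Set n = Σ_{j=1}^r C(p_j, m+1−j), and let P be the collection of all sets of the form X ∪ {p_{j−1}+1, p_{j−2}+1, …, p_1+1}, where 1 ≤ j ≤ r and X is an (m+1−j)-subset of {1,…,p_j}. Then P is a set family of shape (m^n), and for every x ≥ 1 the number of sets in P containing x equals Σ_{i : x ≤ p_i} C(p_i − 1, m − i) + Σ_{i : x = p_i + 1} a_i, where a_i = n − Σ_{j=1}^{i} C(p_j, m+1−j). -/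
/-- The tail `{p_{j-1}+1, …, p_1+1}` appended at level `j` (here `j : Fin r` is the
`(j+1)`-st level in the 1-indexed description). -/
def stmt7Tail (r : ℕ) (p : Fin r → ℕ) (j : Fin r) : Finset ℕ :=
  (Finset.univ.filter fun i : Fin r => i < j).image fun i => p i + 1

/-- The lexicographically least set family: all sets `X ∪ {p_{j-1}+1, …, p_1+1}` where `X`
is an `(m+1-j)`-subset of `{1, …, p_j}` (1-indexed `j`). -/
def stmt7Fam (m r : ℕ) (p : Fin r → ℕ) : Finset (Finset ℕ) :=
  Finset.univ.biUnion fun j : Fin r =>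
    (Finset.powersetCard (m - j.val) (Finset.Icc 1 (p j))).image fun X => X ∪ stmt7Tail r p j

open Finset Function

theorem Finset.sum_filter_lt_eq_sub {ι : Type*} [Fintype ι] [LinearOrder ι]
    (c : ι → ℕ) (i : ι) :
    ∑ j ∈ univ.filter (fun j => i < j), c j =
      ∑ j, c j - ∑ j ∈ univ.filter (fun j => j ≤ i), c j := by
  rw [← sum_filter_add_sum_filter_not univ (fun j => j ≤ i)]
  simp only [not_le, Nat.add_sub_cancel_left]

section PowersetCardUnion

variable {α : Type*} [DecidableEq α]

theorem card_filter_mem_powersetCard_succ {s : Finset α} {a : α} (ha : a ∈ s) (k : ℕ) :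
    #{X ∈ powersetCard (k + 1) s | a ∈ X} = (#s - 1).choose k := by
  have ha' : a ∉ s.erase a := notMem_erase a s
  have hfilter : {X ∈ powersetCard (k + 1) s | a ∈ X} =
      (powersetCard k (s.erase a)).image (insert a) := by
    conv_lhs => rw [← insert_erase ha, powersetCard_succ_insert ha', filter_union]
    rw [filter_false_of_mem fun X hX h => ha' ((mem_powersetCard.1 hX).1 h), empty_union,
      filter_true_of_mem fun X hX => ?_]
    obtain ⟨Y, -, rfl⟩ := mem_image.1 hX
    exact mem_insert_self a Y
  have hinj : Set.InjOn (insert a) (powersetCard k (s.erase a) : Set (Finset α)) :=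
    fun X hX Y hY h => by
      rw [← erase_insert fun h => ha' ((mem_powersetCard.1 hX).1 h),
        ← erase_insert fun h => ha' ((mem_powersetCard.1 hY).1 h), h]
  rw [hfilter, card_image_of_injOn hinj, card_powersetCard, card_erase_of_mem ha]

def powersetCardUnion (k : ℕ) (s t : Finset α) : Finset (Finset α) :=
  (powersetCard k s).image (· ∪ t)

variable {k : ℕ} {s t S : Finset α}

theorem mem_powersetCardUnion :
    S ∈ powersetCardUnion k s t ↔ ∃ X ⊆ s, #X = k ∧ X ∪ t = S := by
  simp [powersetCardUnion, mem_powersetCard, and_assoc]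

theorem subset_of_mem_powersetCardUnion (hS : S ∈ powersetCardUnion k s t) : t ⊆ S := by
  obtain ⟨X, -, -, rfl⟩ := mem_powersetCardUnion.1 hS
  exact subset_union_right

theorem subset_union_of_mem_powersetCardUnion (hS : S ∈ powersetCardUnion k s t) :
    S ⊆ s ∪ t := by
  obtain ⟨X, hX, -, rfl⟩ := mem_powersetCardUnion.1 hS
  exact union_subset_union_left hX

theorem card_of_mem_powersetCardUnion (hst : Disjoint s t) (hS : S ∈ powersetCardUnion k s t) :
    #S = k + #t := by
  obtain ⟨X, hX, rfl, rfl⟩ := mem_powersetCardUnion.1 hS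
  exact card_union_of_disjoint (hst.mono_left hX)

theorem injOn_union_powersetCard (hst : Disjoint s t) :
    Set.InjOn (· ∪ t) (powersetCard k s : Set (Finset α)) := fun X hX Y hY h => by
  rw [← union_sdiff_cancel_right (hst.mono_left (mem_powersetCard.1 hX).1),
    ← union_sdiff_cancel_right (hst.mono_left (mem_powersetCard.1 hY).1)]
  exact congrArg (· \ t) h

theorem card_powersetCardUnion (hst : Disjoint s t) :
    #(powersetCardUnion k s t) = (#s).choose k := by
  rw [powersetCardUnion, card_image_of_injOn (injOn_union_powersetCard hst), card_powersetCard]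

theorem card_filter_mem_powersetCardUnion_of_mem_right (hst : Disjoint s t) {x : α}
    (hx : x ∈ t) : #{S ∈ powersetCardUnion k s t | x ∈ S} = (#s).choose k := by
  rw [filter_true_of_mem fun S hS => subset_of_mem_powersetCardUnion hS hx,
    card_powersetCardUnion hst]

theorem card_filter_mem_powersetCardUnion_of_mem_left (hst : Disjoint s t) {x : α}
    (hx : x ∈ s) : #{S ∈ powersetCardUnion (k + 1) s t | x ∈ S} = (#s - 1).choose k := by
  have hxt : x ∉ t := disjoint_left.1 hst hx
  rw [powersetCardUnion, filter_image,
    card_image_of_injOn ((injOn_union_powersetCard hst).mono (filter_subset _ _))]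
  simp only [mem_union, hxt, or_false]
  exact card_filter_mem_powersetCard_succ hx k

theorem card_filter_mem_powersetCardUnion_of_notMem {x : α} (hs : x ∉ s) (ht : x ∉ t) :
    #{S ∈ powersetCardUnion k s t | x ∈ S} = 0 := by
  rw [card_eq_zero, filter_eq_empty_iff]
  intro S hS hx
  simpa [hs, ht] using subset_union_of_mem_powersetCardUnion hS hx

end PowersetCardUnion

section Stmt7

variable {m r : ℕ} {p : Fin r → ℕ}

def stmt7Level (m r : ℕ) (p : Fin r → ℕ) (j : Fin r) : Finset (Finset ℕ) :=
  powersetCardUnion (m - j) (Icc 1 (p j)) (stmt7Tail r p j)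

theorem stmt7Fam_eq_biUnion : stmt7Fam m r p = univ.biUnion (stmt7Level m r p) := rfl

theorem mem_stmt7Tail {j : Fin r} {y : ℕ} : y ∈ stmt7Tail r p j ↔ ∃ i < j, p i + 1 = y := by
  simp [stmt7Tail]

theorem card_stmt7Tail (hp : Injective p) (j : Fin r) : #(stmt7Tail r p j) = j := by
  rw [stmt7Tail, card_image_of_injective _ fun a b h => hp (Nat.add_right_cancel h),
    filter_gt_eq_Iio, Fin.card_Iio]

theorem StrictAnti.add_one_lt_of_mem_stmt7Tail (hp : StrictAnti p) {j : Fin r} {y : ℕ}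
    (hy : y ∈ stmt7Tail r p j) : p j + 1 < y := by
  obtain ⟨i, hij, rfl⟩ := mem_stmt7Tail.1 hy
  exact Nat.add_lt_add_right (hp hij) 1

theorem StrictAnti.disjoint_Icc_stmt7Tail (hp : StrictAnti p) (j : Fin r) :
    Disjoint (Icc 1 (p j)) (stmt7Tail r p j) :=
  disjoint_left.2 fun y hy hyT => by
    have := hp.add_one_lt_of_mem_stmt7Tail hyT
    have := (mem_Icc.1 hy).2
    omega

theorem StrictAnti.pairwise_disjoint_stmt7Level (hp : StrictAnti p) :
    Pairwise (Disjoint on (stmt7Level m r p)) := by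
  refine (pairwise_disjoint_on _).2 fun i j hij => disjoint_left.2 fun S hSi hSj => ?_
  have hmem : p i + 1 ∈ S :=
    subset_of_mem_powersetCardUnion hSj (mem_stmt7Tail.2 ⟨i, hij, rfl⟩)
  rcases mem_union.1 (subset_union_of_mem_powersetCardUnion hSi hmem) with h | h
  · simp at h
  · exact (hp.add_one_lt_of_mem_stmt7Tail h).false

theorem StrictAnti.card_stmt7Fam (hp : StrictAnti p) :
    #(stmt7Fam m r p) = ∑ j, (p j).choose (m - j) := by
  rw [stmt7Fam_eq_biUnion, card_biUnion (hp.pairwise_disjoint_stmt7Level.set_pairwise _)]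
  refine sum_congr rfl fun j _ => ?_
  rw [stmt7Level, card_powersetCardUnion (hp.disjoint_Icc_stmt7Tail j), Nat.card_Icc,
    Nat.add_sub_cancel]

theorem StrictAnti.card_eq_and_pos_of_mem_stmt7Fam (hp : StrictAnti p) (hrm : r ≤ m)
    {S : Finset ℕ} (hS : S ∈ stmt7Fam m r p) : #S = m ∧ ∀ x ∈ S, 1 ≤ x := by
  obtain ⟨j, -, hSj⟩ := mem_biUnion.1 hS
  refine ⟨?_, fun x hx => ?_⟩
  · rw [card_of_mem_powersetCardUnion (hp.disjoint_Icc_stmt7Tail j) hSj,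
      card_stmt7Tail hp.injective]
    omega
  · rcases mem_union.1 (subset_union_of_mem_powersetCardUnion hSj hx) with h | h
    · exact (mem_Icc.1 h).1
    · obtain ⟨i, -, rfl⟩ := mem_stmt7Tail.1 h
      exact Nat.le_add_left 1 (p i)

theorem StrictAnti.card_filter_mem_stmt7Level (hp : StrictAnti p) {j : Fin r}
    (hj : (j : ℕ) < m) {x : ℕ} (hx : 1 ≤ x) :
    #{S ∈ stmt7Level m r p j | x ∈ S} =
      (if x ≤ p j then (p j - 1).choose (m - 1 - j) else 0) +
        if x ∈ stmt7Tail r p j then (p j).choose (m - j) else 0 := by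
  have hdisj := hp.disjoint_Icc_stmt7Tail j
  by_cases hxT : x ∈ stmt7Tail r p j
  · have := hp.add_one_lt_of_mem_stmt7Tail hxT
    rw [if_neg (by omega), if_pos hxT, zero_add, stmt7Level,
      card_filter_mem_powersetCardUnion_of_mem_right hdisj hxT, Nat.card_Icc, Nat.add_sub_cancel]
  rw [if_neg hxT, add_zero]
  by_cases hxp : x ≤ p j
  · rw [if_pos hxp, stmt7Level, show m - j = m - 1 - j + 1 by omega,
      card_filter_mem_powersetCardUnion_of_mem_left hdisj (mem_Icc.2 ⟨hx, hxp⟩), Nat.card_Icc,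
      Nat.add_sub_cancel]
  · rw [if_neg hxp]
    exact card_filter_mem_powersetCardUnion_of_notMem (by simp [hxp]) hxT

theorem StrictAnti.famMult_stmt7Fam (hp : StrictAnti p) (hrm : r ≤ m) {x : ℕ} (hx : 1 ≤ x) :
    famMult (stmt7Fam m r p) x =
      ∑ i ∈ univ.filter (fun i => x ≤ p i), (p i - 1).choose (m - 1 - i) +
        ∑ j, if x ∈ stmt7Tail r p j then (p j).choose (m - j) else 0 := by
  rw [famMult, stmt7Fam_eq_biUnion, filter_biUnion, card_biUnion fun i _ j _ hij =>
    (hp.pairwise_disjoint_stmt7Level hij).mono (filter_subset _ _) (filter_subset _ _)]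
  rw [sum_congr rfl fun j _ => hp.card_filter_mem_stmt7Level (by omega) hx, sum_add_distrib,
    sum_ite, sum_const_zero, add_zero]

theorem StrictAnti.sum_ite_mem_stmt7Tail (hp : StrictAnti p) (x : ℕ) (c : Fin r → ℕ) :
    (∑ j, if x ∈ stmt7Tail r p j then c j else 0) =
      ∑ i ∈ univ.filter (fun i => x = p i + 1),
        ∑ j ∈ univ.filter (fun j => i < j), c j := by
  by_cases hx : ∃ i, x = p i + 1
  · obtain ⟨i₀, rfl⟩ := hx
    have hfiber : univ.filter (fun i => p i₀ + 1 = p i + 1) = {i₀} := by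
      ext i
      simp [hp.injective.eq_iff, eq_comm]
    rw [hfiber, sum_singleton, sum_filter]
    refine sum_congr rfl fun j _ => ?_
    simp [mem_stmt7Tail, hp.injective.eq_iff]
  · simp only [not_exists] at hx
    have hxT : ∀ j, x ∉ stmt7Tail r p j := fun j h => by
      obtain ⟨i, -, rfl⟩ := mem_stmt7Tail.1 h
      exact hx i rfl
    simp [hxT, hx]

end Stmt7

/-- Indices of `p` are 1-indexed in the informal statement: `j : Fin r` corresponds to the
index `j + 1`, so `m + 1 - (j + 1) = m - j.val`. -/
theorem stmt_7_general (m r : ℕ) (hrm : r ≤ m)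
    (p : Fin r → ℕ)
    (hdec : ∀ i j : Fin r, i < j → p j < p i) :
    IsSetFamily m (∑ j : Fin r, (p j).choose (m - j.val)) (stmt7Fam m r p) ∧
    ∀ x : ℕ, 1 ≤ x →
      famMult (stmt7Fam m r p) x =
        (∑ i ∈ Finset.univ.filter fun i : Fin r => x ≤ p i, (p i - 1).choose (m - 1 - i.val))
        + ∑ i ∈ Finset.univ.filter fun i : Fin r => x = p i + 1,
            ((∑ j : Fin r, (p j).choose (m - j.val))
              - ∑ j ∈ Finset.univ.filter fun j : Fin r => j ≤ i, (p j).choose (m - j.val)) := by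
  have hp : StrictAnti p := hdec
  refine ⟨⟨hp.card_stmt7Fam, fun S hS => hp.card_eq_and_pos_of_mem_stmt7Fam hrm hS⟩,
    fun x hx => ?_⟩
  rw [hp.famMult_stmt7Fam hrm hx, hp.sum_ite_mem_stmt7Tail]
  simp only [sum_filter_lt_eq_sub]

/-- For `p_1 > ⋯ > p_r > 0` with `p_j ≥ m+1-j`, the family `stmt7Fam`
is a set family of shape `(m^n)` with `n = Σ_j C(p_j, m+1-j)`, and the number of its sets
containing `x ≥ 1` is `Σ_{i : x ≤ p_i} C(p_i - 1, m - i) + Σ_{i : x = p_i + 1} a_i` where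
`a_i = n - Σ_{j ≤ i} C(p_j, m+1-j)`.  (Indices of `p` are 1-indexed in the informal
statement; `j : Fin r` corresponds to the index `j+1`, so `m+1-(j+1) = m - j.val`.) -/
theorem stmt_7 (m r : ℕ) (hm : 1 ≤ m) (hr : 1 ≤ r) (hrm : r ≤ m)
    (p : Fin r → ℕ)
    (hdec : ∀ i j : Fin r, i < j → p j < p i)
    (hpos : ∀ j : Fin r, 0 < p j)
    (hbig : ∀ j : Fin r, m - j.val ≤ p j) :
    IsSetFamily m (∑ j : Fin r, (p j).choose (m - j.val)) (stmt7Fam m r p) ∧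
    ∀ x : ℕ, 1 ≤ x →
      famMult (stmt7Fam m r p) x =
        (∑ i ∈ Finset.univ.filter fun i : Fin r => x ≤ p i, (p i - 1).choose (m - 1 - i.val))
        + ∑ i ∈ Finset.univ.filter fun i : Fin r => x = p i + 1,
            ((∑ j : Fin r, (p j).choose (m - j.val))
              - ∑ j ∈ Finset.univ.filter fun j : Fin r => j ≤ i, (p j).choose (m - j.val)) :=
  stmt_7_general m r hrm p hdec
end

section
/- Let n ≥ 1. A set family P of shape (2^n), i.e. a collection of n distinct 2-subsets of ℕ, is closed if and only if there exist r ≥ 1 and integers α_1 > α_2 > … > α_r > 0 with α_1 + … + α_r = n such that P = { {i, i+j} : 1 ≤ i ≤ r, 1 ≤ j ≤ α_i }. -/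
/-!
A closed family of 2-sets is read off row by row: for each `i ≥ 1` the `j ≥ 1` with
`{i, i + j}` in the family form an initial segment `[1, α i]`, and the rows `i` with
`α i > 0` form an initial segment `[1, r]`. Majorizing `{i + 1, i + 1 + α (i + 1)}` gives
`{i, i + α (i + 1) + 1}`, so `α` strictly decreases on `[1, r]`. Conversely, when `α`
strictly decreases, the largest element `i + α i` of the `i`-th row is antitone in `i`,
which is exactly what closedness of the staircase requires.
-/

lemma Finset.sort_pair_of_lt {α : Type*} [LinearOrder α] {a b : α} (h : a < b) :
    ({a, b} : Finset α).sort (· ≤ ·) = [a, b] := by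
  have : ({a, b} : Finset α).sort (· ≤ ·) = a :: ({b} : Finset α).sort (· ≤ ·) :=
    Finset.sort_insert _ (by simp [h.le]) (by simp [h.ne])
  rw [this, Finset.sort_singleton]

lemma Finset.exists_lt_eq_pair_of_card_eq_two {α : Type*} [LinearOrder α] {S : Finset α}
    (h : S.card = 2) : ∃ a b, a < b ∧ S = {a, b} := by
  obtain ⟨a, b, hne, rfl⟩ := Finset.card_eq_two.mp h
  rcases hne.lt_or_gt with h | h
  · exact ⟨a, b, h, rfl⟩
  · exact ⟨b, a, h, Finset.pair_comm a b⟩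

lemma Finset.pair_eq_pair_iff_of_lt {a b c d : ℕ} (hab : a < b) (hcd : c < d) :
    ({a, b} : Finset ℕ) = {c, d} ↔ a = c ∧ b = d := by
  refine ⟨fun h => ?_, fun ⟨rfl, rfl⟩ => rfl⟩
  have hc : c ∈ ({a, b} : Finset ℕ) := h ▸ by simp
  have hd : d ∈ ({a, b} : Finset ℕ) := h ▸ by simp
  have ha : a ∈ ({c, d} : Finset ℕ) := h ▸ by simp
  simp only [Finset.mem_insert, Finset.mem_singleton] at hc hd ha
  omega

lemma iff_le_findGreatest_of_downward_closed {p : ℕ → Prop} [DecidablePred p] {N j : ℕ}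
    (hdown : ∀ j k, 1 ≤ j → j ≤ k → p k → p j) (hbdd : ∀ j, p j → j ≤ N) (hj : 1 ≤ j) :
    p j ↔ j ≤ Nat.findGreatest p N :=
  ⟨fun h => Nat.le_findGreatest (hbdd j h) h,
    fun h => hdown j _ hj h (Nat.findGreatest_of_ne_zero rfl (by omega))⟩

lemma StrictAntiOn.antitoneOn_id_add {f : ℕ → ℕ} {s : Set ℕ} (hf : StrictAntiOn f s)
    (hs : s.OrdConnected) : AntitoneOn (fun i => i + f i) s := by
  intro a ha i hi hai
  induction i, hai using Nat.le_induction with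
  | base => rfl
  | succ i hai ih =>
    have his : i ∈ s := hs.out ha hi ⟨hai, i.le_succ⟩
    have := hf his hi i.lt_succ_self
    have := ih his
    dsimp only at this ⊢
    omega

lemma setMaj_pair_iff {a b c d : ℕ} (hab : a < b) (hcd : c < d) :
    SetMaj {a, b} {c, d} ↔ a ≤ c ∧ b ≤ d := by
  unfold SetMaj
  rw [Finset.sort_pair_of_lt hab, Finset.sort_pair_of_lt hcd]
  refine ⟨fun h => ⟨h 0, h 1⟩, ?_⟩
  rintro ⟨hac, hbd⟩ (_ | _ | r)
  exacts [hac, hbd, by simp]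

def staircase (r : ℕ) (α : ℕ → ℕ) : Finset (Finset ℕ) :=
  (Finset.Icc 1 r).biUnion fun i => (Finset.Icc 1 (α i)).image fun j => ({i, i + j} : Finset ℕ)

lemma mem_staircase {r : ℕ} {α : ℕ → ℕ} {S : Finset ℕ} :
    S ∈ staircase r α ↔ ∃ i, (1 ≤ i ∧ i ≤ r) ∧ ∃ j, (1 ≤ j ∧ j ≤ α i) ∧ {i, i + j} = S := by
  simp only [staircase, Finset.mem_biUnion, Finset.mem_image, Finset.mem_Icc]

lemma pair_mem_staircase_iff {r : ℕ} {α : ℕ → ℕ} {a b : ℕ} (hab : a < b) :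
    {a, b} ∈ staircase r α ↔ 1 ≤ a ∧ a ≤ r ∧ b ≤ a + α a := by
  rw [mem_staircase]
  constructor
  · rintro ⟨i, hi, j, hj, hS⟩
    obtain ⟨rfl, rfl⟩ := (Finset.pair_eq_pair_iff_of_lt (by omega) hab).1 hS
    omega
  · rintro ⟨ha, har, hb⟩
    exact ⟨a, ⟨ha, har⟩, b - a, ⟨by omega, by omega⟩, by rw [Nat.add_sub_cancel' hab.le]⟩

lemma card_staircase (r : ℕ) (α : ℕ → ℕ) :
    (staircase r α).card = ∑ i ∈ Finset.Icc 1 r, α i := by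
  rw [staircase, Finset.card_biUnion]
  · refine Finset.sum_congr rfl fun i _ => ?_
    rw [Finset.card_image_of_injOn, Nat.card_Icc, Nat.add_sub_cancel]
    intro j hj k hk hjk
    simp only [Finset.coe_Icc, Set.mem_Icc] at hj hk
    have := (Finset.pair_eq_pair_iff_of_lt (by omega) (by omega)).1 hjk
    omega
  · intro i _ i' _ hii'
    simp only [Function.onFun, Finset.disjoint_left, Finset.mem_image, Finset.mem_Icc]
    rintro _ ⟨j, hj, rfl⟩ ⟨k, hk, hS⟩
    have := (Finset.pair_eq_pair_iff_of_lt (by omega) (by omega)).1 hS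
    omega

lemma closedFam_staircase {r : ℕ} {α : ℕ → ℕ} (hα : StrictAntiOn α (Set.Icc 1 r)) :
    ClosedFam 2 (staircase r α) := by
  intro B hB A hA hApos hAB
  obtain ⟨i, hi, j, ⟨hj, hjα⟩, rfl⟩ := mem_staircase.1 hB
  obtain ⟨a, b, hab, rfl⟩ := Finset.exists_lt_eq_pair_of_card_eq_two hA
  obtain ⟨hai, hbi⟩ := (setMaj_pair_iff hab (by omega)).1 hAB
  have ha : 1 ≤ a := hApos a (by simp)
  have : i + α i ≤ a + α a :=
    hα.antitoneOn_id_add Set.ordConnected_Icc ⟨ha, hai.trans hi.2⟩ hi hai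
  exact (pair_mem_staircase_iff hab).2 ⟨ha, by omega, by omega⟩

namespace ClosedFam

variable {P : Finset (Finset ℕ)}

lemma pair_mem (hcl : ClosedFam 2 P) {a b c d : ℕ} (hB : {a, b} ∈ P) (hab : a < b)
    (hc : 1 ≤ c) (hcd : c < d) (hca : c ≤ a) (hdb : d ≤ b) : {c, d} ∈ P := by
  refine hcl _ hB _ (Finset.card_pair hcd.ne) ?_ ((setMaj_pair_iff hcd hab).2 ⟨hca, hdb⟩)
  simp only [Finset.mem_insert, Finset.mem_singleton]
  omega

def maxEntry (P : Finset (Finset ℕ)) : ℕ := P.sup fun S => S.sup id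

lemma le_maxEntry {S : Finset ℕ} {x : ℕ} (hS : S ∈ P) (hx : x ∈ S) : x ≤ maxEntry P :=
  (Finset.le_sup (f := id) hx).trans (Finset.le_sup (f := fun S => S.sup id) hS)

/- For a closed family these are the `α` and `r` of the staircase; `maxEntry P` only bounds
the search. -/
def rowLen (P : Finset (Finset ℕ)) (i : ℕ) : ℕ :=
  Nat.findGreatest (fun j => ({i, i + j} : Finset ℕ) ∈ P) (maxEntry P)

def rowCount (P : Finset (Finset ℕ)) : ℕ :=
  Nat.findGreatest (fun i => ({i, i + 1} : Finset ℕ) ∈ P) (maxEntry P)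

lemma pair_add_mem_iff (hcl : ClosedFam 2 P) {i j : ℕ} (hi : 1 ≤ i) (hj : 1 ≤ j) :
    {i, i + j} ∈ P ↔ j ≤ rowLen P i := by
  refine iff_le_findGreatest_of_downward_closed (p := fun j => ({i, i + j} : Finset ℕ) ∈ P)
    (fun j k hj hjk hk => ?_) (fun k hk => ?_) hj
  · exact hcl.pair_mem hk (by omega) hi (by omega) le_rfl (by omega)
  · have := le_maxEntry hk (by simp : i + k ∈ _)
    omega

lemma pair_succ_mem_iff (hcl : ClosedFam 2 P) {i : ℕ} (hi : 1 ≤ i) :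
    {i, i + 1} ∈ P ↔ i ≤ rowCount P := by
  refine iff_le_findGreatest_of_downward_closed (p := fun i => ({i, i + 1} : Finset ℕ) ∈ P)
    (fun j k hj hjk hk => ?_) (fun k hk => ?_) hi
  · exact hcl.pair_mem hk (by omega) hj (by omega) hjk (by omega)
  · exact le_maxEntry hk (by simp : k ∈ _)

lemma rowLen_pos_iff (hcl : ClosedFam 2 P) {i : ℕ} (hi : 1 ≤ i) :
    0 < rowLen P i ↔ i ≤ rowCount P := by
  rw [← hcl.pair_succ_mem_iff hi, hcl.pair_add_mem_iff hi le_rfl]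
  rfl

lemma rowLen_succ_lt (hcl : ClosedFam 2 P) {i : ℕ} (hi : 1 ≤ i) (hpos : 0 < rowLen P (i + 1)) :
    rowLen P (i + 1) < rowLen P i := by
  have hlast := (hcl.pair_add_mem_iff (by omega) hpos).2 le_rfl
  have hup : {i, i + (rowLen P (i + 1) + 1)} ∈ P :=
    hcl.pair_mem hlast (by omega) hi (by omega) (by omega) (by omega)
  exact (hcl.pair_add_mem_iff hi (by omega)).1 hup

lemma rowLen_strictAntiOn (hcl : ClosedFam 2 P) :
    StrictAntiOn (rowLen P) (Set.Icc 1 (rowCount P)) := by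
  refine strictAntiOn_of_succ_lt Set.ordConnected_Icc fun i _ hi hsucc => ?_
  rw [Order.succ_eq_add_one] at hsucc ⊢
  exact hcl.rowLen_succ_lt hi.1 ((hcl.rowLen_pos_iff (by omega)).2 hsucc.2)

lemma one_le_rowCount (hcl : ClosedFam 2 P) (hP : ∀ S ∈ P, S.card = 2 ∧ ∀ x ∈ S, 1 ≤ x)
    (hne : P.Nonempty) : 1 ≤ rowCount P := by
  obtain ⟨S, hS⟩ := hne
  obtain ⟨a, b, hab, rfl⟩ := Finset.exists_lt_eq_pair_of_card_eq_two (hP _ hS).1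
  have ha : 1 ≤ a := (hP _ hS).2 a (by simp)
  exact (hcl.pair_succ_mem_iff le_rfl).1 (hcl.pair_mem hS hab le_rfl (by omega) ha (by omega))

lemma eq_staircase (hcl : ClosedFam 2 P) (hP : ∀ S ∈ P, S.card = 2 ∧ ∀ x ∈ S, 1 ≤ x) :
    P = staircase (rowCount P) (rowLen P) := by
  have hpair : ∀ a b, 1 ≤ a → a < b →
      ({a, b} ∈ P ↔ {a, b} ∈ staircase (rowCount P) (rowLen P)) := by
    intro a b ha hab
    obtain ⟨j, rfl⟩ : ∃ j, b = a + j := ⟨b - a, by omega⟩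
    rw [pair_mem_staircase_iff hab, hcl.pair_add_mem_iff ha (by omega),
      ← hcl.rowLen_pos_iff ha]
    omega
  ext S
  constructor
  · intro hS
    obtain ⟨a, b, hab, rfl⟩ := Finset.exists_lt_eq_pair_of_card_eq_two (hP _ hS).1
    exact (hpair a b ((hP _ hS).2 a (by simp)) hab).1 hS
  · intro hS
    obtain ⟨i, ⟨hi, -⟩, j, ⟨hj, -⟩, rfl⟩ := mem_staircase.1 hS
    exact (hpair i (i + j) hi (by omega)).2 hS

end ClosedFam

/-- A set family of shape `(2^n)` is closed iff it has the form
`{ {i, i+j} : 1 ≤ i ≤ r, 1 ≤ j ≤ α_i }` for some `α_1 > ⋯ > α_r > 0` with `Σ α_i = n`. -/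
theorem stmt_11 (n : ℕ) (hn : 1 ≤ n) (P : Finset (Finset ℕ)) (hP : IsSetFamily 2 n P) :
    ClosedFam 2 P ↔
      ∃ (r : ℕ) (α : ℕ → ℕ), 1 ≤ r ∧
        (∀ i j : ℕ, 1 ≤ i → i < j → j ≤ r → α j < α i) ∧
        (∀ i : ℕ, 1 ≤ i → i ≤ r → 0 < α i) ∧
        (∑ i ∈ Finset.Icc 1 r, α i) = n ∧
        P = (Finset.Icc 1 r).biUnion fun i =>
              (Finset.Icc 1 (α i)).image fun j => ({i, i + j} : Finset ℕ) := by
  obtain ⟨hcard, hmem⟩ := hP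
  constructor
  · intro hcl
    have hPeq := hcl.eq_staircase hmem
    refine ⟨ClosedFam.rowCount P, ClosedFam.rowLen P,
      hcl.one_le_rowCount hmem (Finset.card_pos.1 (by omega)),
      fun i j hi hij hjr => hcl.rowLen_strictAntiOn ⟨hi, by omega⟩ ⟨by omega, hjr⟩ hij,
      fun i hi hir => (hcl.rowLen_pos_iff hi).2 hir, ?_, hPeq⟩
    rw [← card_staircase, ← hPeq, hcard]
  · rintro ⟨r, α, -, hdec, -, -, rfl⟩
    exact closedFam_staircase fun i hi j hj hij => hdec i j hi.1 hij hj.2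
end

section
/- Let α_1 > α_2 > … > α_r > 0 be integers with α_1 + … + α_r = n. The set family P = { {i, i+j} : 1 ≤ i ≤ r, 1 ≤ j ≤ α_i } of shape (2^n) has a defined type, and this type equals 2[α]: explicitly, for 1 ≤ x ≤ r the number of sets in P containing x equals α_x + x − 1, and for x > r it equals #{i : 1 ≤ i ≤ r, α_i + i ≥ x}. -/
/-- The closed set family `{ {i, i+j} : 1 ≤ i ≤ r, 1 ≤ j ≤ α_i }` of shape `(2^n)`. -/
def segFam (r : ℕ) (α : ℕ → ℕ) : Finset (Finset ℕ) :=
  (Finset.Icc 1 r).biUnion fun i => (Finset.Icc 1 (α i)).image fun j => ({i, i + j} : Finset ℕ)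

open Finset

theorem StrictAntiOn.apply_add_sub_le {f : ℕ → ℕ} {a b i j : ℕ}
    (hf : StrictAntiOn f (Set.Icc a b)) (hai : a ≤ i) (hij : i ≤ j) (hjb : j ≤ b) :
    f j + (j - i) ≤ f i := by
  induction j, hij using Nat.le_induction with
  | base => simp
  | succ j hij ih =>
    have := hf ⟨by omega, by omega⟩ ⟨by omega, hjb⟩ (Nat.lt_succ_self j)
    have := ih (by omega)
    omega

theorem typeDefined_of_succ_le_s12 {f : ℕ → ℕ} (hf : ∀ x, 1 ≤ x → f (x + 1) ≤ f x) :
    TypeDefined f := fun _ _ hi hij =>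
  antitoneOn_nat_Ici_of_succ_le hf hi (le_trans hi hij) hij

def segIndex (r : ℕ) (α : ℕ → ℕ) : Finset (Σ _ : ℕ, ℕ) :=
  (Icc 1 r).sigma fun i => Icc 1 (α i)

def segSet (p : Σ _ : ℕ, ℕ) : Finset ℕ := {p.1, p.1 + p.2}

theorem segSet_injOn : Set.InjOn segSet {p | 1 ≤ p.2} := by
  rintro ⟨i, j⟩ hj ⟨i', j'⟩ hj' h
  have h1 : i ∈ segSet ⟨i', j'⟩ := h ▸ by simp [segSet]
  have h2 : i' ∈ segSet ⟨i, j⟩ := h ▸ by simp [segSet]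
  have h3 : i + j ∈ segSet ⟨i', j'⟩ := h ▸ by simp [segSet]
  simp only [segSet, Set.mem_ofPred_eq, mem_insert, mem_singleton] at h1 h2 h3 hj hj'
  obtain ⟨rfl, rfl⟩ : i = i' ∧ j = j' := by omega
  rfl

theorem segFam_eq_image (r : ℕ) (α : ℕ → ℕ) : segFam r α = (segIndex r α).image segSet := by
  ext S
  simp [segFam, segIndex, segSet, and_assoc]

theorem segSet_injOn_segIndex (r : ℕ) (α : ℕ → ℕ) : Set.InjOn segSet (segIndex r α) :=
  segSet_injOn.mono fun p hp => by simp_all [segIndex]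

theorem card_segFam (r : ℕ) (α : ℕ → ℕ) : #(segFam r α) = ∑ i ∈ Icc 1 r, α i := by
  rw [segFam_eq_image, card_image_of_injOn (segSet_injOn_segIndex r α), segIndex, card_sigma]
  simp

theorem card_filter_mem_segSet (x i a : ℕ) :
    #{j ∈ Icc 1 a | x = i ∨ x = i + j}
      = if x = i then a else if i < x ∧ x ≤ a + i then 1 else 0 := by
  split_ifs with h₁
  · rw [filter_true_of_mem fun _ _ => Or.inl h₁, Nat.card_Icc, Nat.add_sub_cancel]
  · rw [card_eq_one]
    exact ⟨x - i, by ext j; simp only [mem_filter, mem_Icc, mem_singleton]; omega⟩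
  · rw [card_eq_zero, filter_eq_empty_iff]
    intro j hj
    simp only [mem_Icc] at hj
    omega

theorem famMult_segFam (r : ℕ) (α : ℕ → ℕ) (x : ℕ) :
    famMult (segFam r α) x
      = (if x ∈ Icc 1 r then α x else 0) + #{i ∈ Icc 1 r | i < x ∧ x ≤ α i + i} := by
  rw [famMult, segFam_eq_image, filter_image,
    card_image_of_injOn ((segSet_injOn_segIndex r α).mono (filter_subset _ _)), segIndex,
    filter_sigma, card_sigma]
  simp only [segSet, mem_insert, mem_singleton, card_filter_mem_segSet]
  rw [card_filter, ← sum_ite_eq, ← sum_add_distrib]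
  refine sum_congr rfl fun i _ => ?_
  split_ifs <;> omega

section
variable {r : ℕ} {α : ℕ → ℕ}

theorem famMult_segFam_of_le (hα : StrictAntiOn α (Set.Icc 1 r)) {x : ℕ} (hx1 : 1 ≤ x)
    (hxr : x ≤ r) : famMult (segFam r α) x = α x + x - 1 := by
  have hlower : {i ∈ Icc 1 r | i < x ∧ x ≤ α i + i} = Ico 1 x := by
    ext i
    simp only [mem_filter, mem_Icc, mem_Ico]
    constructor
    · omega
    · rintro ⟨hi1, hix⟩
      have := hα.apply_add_sub_le hi1 hix.le hxr
      omega
  rw [famMult_segFam, if_pos (mem_Icc.2 ⟨hx1, hxr⟩), hlower, Nat.card_Ico]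
  omega

theorem famMult_segFam_of_lt {x : ℕ} (hx : r < x) :
    famMult (segFam r α) x = #{i ∈ Icc 1 r | x ≤ α i + i} := by
  rw [famMult_segFam, if_neg (by simp only [mem_Icc]; omega), zero_add]
  refine congrArg card (filter_congr fun i hi => ?_)
  simp only [mem_Icc] at hi
  omega

theorem famMult_segFam_succ_le (hα : StrictAntiOn α (Set.Icc 1 r))
    (hpos : ∀ i ∈ Set.Icc 1 r, 0 < α i) {x : ℕ} (hx : 1 ≤ x) :
    famMult (segFam r α) (x + 1) ≤ famMult (segFam r α) x := by
  rcases lt_trichotomy x r with hxr | rfl | hrx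
  · rw [famMult_segFam_of_le hα (x := x + 1) (by omega) hxr, famMult_segFam_of_le hα hx hxr.le]
    have : α (x + 1) < α x := hα ⟨hx, hxr.le⟩ ⟨by omega, hxr⟩ (by omega)
    omega
  · rw [famMult_segFam_of_lt (x := x + 1) (by omega), famMult_segFam_of_le hα hx le_rfl]
    have := hpos x ⟨hx, le_rfl⟩
    have := (card_filter_le (Icc 1 x) fun i => x + 1 ≤ α i + i).trans_eq (Nat.card_Icc 1 x)
    omega
  · rw [famMult_segFam_of_lt hrx, famMult_segFam_of_lt (x := x + 1) (by omega)]
    exact card_le_card (monotone_filter_right _ fun i _ h => by omega)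

end

theorem isSetFamily_segFam (r : ℕ) (α : ℕ → ℕ) :
    IsSetFamily 2 (∑ i ∈ Icc 1 r, α i) (segFam r α) := by
  refine ⟨card_segFam r α, fun S hS => ?_⟩
  rw [segFam_eq_image, mem_image] at hS
  obtain ⟨⟨i, j⟩, hij, rfl⟩ := hS
  simp only [segIndex, mem_sigma, mem_Icc] at hij
  simp only [segSet]
  refine ⟨card_pair (by omega), fun x hx => ?_⟩
  simp only [mem_insert, mem_singleton] at hx
  omega

theorem stmt_12_general (n r : ℕ) (α : ℕ → ℕ)
    (hdec : ∀ i j : ℕ, 1 ≤ i → i < j → j ≤ r → α j < α i)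
    (hpos : ∀ i : ℕ, 1 ≤ i → i ≤ r → 0 < α i)
    (hsum : (∑ i ∈ Finset.Icc 1 r, α i) = n) :
    IsSetFamily 2 n (segFam r α) ∧
    TypeDefined (famMult (segFam r α)) ∧
    (∀ x : ℕ, 1 ≤ x → x ≤ r → famMult (segFam r α) x = α x + x - 1) ∧
    (∀ x : ℕ, r < x →
      famMult (segFam r α) x = ((Finset.Icc 1 r).filter fun i => x ≤ α i + i).card) := by
  have hα : StrictAntiOn α (Set.Icc 1 r) := fun i hi j hj hij => hdec i j hi.1 hij hj.2
  exact ⟨hsum ▸ isSetFamily_segFam r α,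
    typeDefined_of_succ_le_s12 fun x => famMult_segFam_succ_le hα fun i hi => hpos i hi.1 hi.2,
    fun x => famMult_segFam_of_le hα, fun x => famMult_segFam_of_lt⟩

/-- For `α_1 > ⋯ > α_r > 0` with `Σ α_i = n`, the family
`{ {i, i+j} : 1 ≤ i ≤ r, 1 ≤ j ≤ α_i }` has a defined type, equal to `2[α]`: the number of
its sets containing `x` is `α_x + x - 1` for `1 ≤ x ≤ r`, and `#{i ≤ r : α_i + i ≥ x}` for
`x > r`. -/
theorem stmt_12 (n r : ℕ) (α : ℕ → ℕ) (hr : 1 ≤ r)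
    (hdec : ∀ i j : ℕ, 1 ≤ i → i < j → j ≤ r → α j < α i)
    (hpos : ∀ i : ℕ, 1 ≤ i → i ≤ r → 0 < α i)
    (hsum : (∑ i ∈ Finset.Icc 1 r, α i) = n) :
    IsSetFamily 2 n (segFam r α) ∧
    TypeDefined (famMult (segFam r α)) ∧
    (∀ x : ℕ, 1 ≤ x → x ≤ r → famMult (segFam r α) x = α x + x - 1) ∧
    (∀ x : ℕ, r < x →
      famMult (segFam r α) x = ((Finset.Icc 1 r).filter fun i => x ≤ α i + i).card) :=
  stmt_12_general n r α hdec hpos hsum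
end
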